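/- arXiv:2503.08031 — 3 statements merged into one kernel-verified Lean document; each statement's English description precedes it below -/
import Mathlib

section
/- Under edge-weight sampling with $N_n\to\infty$ and $\log(N_n|\mathcal{C}_n|)^5 = o(\sqrt{N_n}\,\eta(\mathcal{C}_n))$ as $n\to\infty$, the empirical correlation matrix $\hat R$ with entries $\hat R_{ij}=\hat s_{ij}/\sqrt{\hat s_{ii}\hat s_{jj}}$ satisfies $\|\hat R - R\|_\infty \log(|\mathcal{C}_n|)^2 \to 0$ in probability as $n\to\infty$, where $R_{ij}=s_{ij}/\sqrt{s_{ii}s_{jj}}$ and $\|\cdot\|_\infty$ denotes the maximum absolute entry. -/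
open MeasureTheory ProbabilityTheory Filter Finset
open scoped ENNReal NNReal

noncomputable section

namespace GS

/-- Signed incidence vector `δ_e = u_i - u_j` of an ordered pair `e = (i,j)`. -/
def edgeVec (n : ℕ) (p : Fin n × Fin n) : Fin n → ℝ :=
  fun k => (if k = p.1 then (1 : ℝ) else 0) - (if k = p.2 then (1 : ℝ) else 0)

/-- Rank-one edge matrix `Δ_e = δ_e δ_e^⊤`. -/
def edgeMat (n : ℕ) (p : Fin n × Fin n) : Matrix (Fin n) (Fin n) ℝ :=
  Matrix.vecMulVec (edgeVec n p) (edgeVec n p)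

/-- The ordered pairs `(i,j)` with `i < j`, indexing the potential edges. -/
def pairs (n : ℕ) : Finset (Fin n × Fin n) :=
  Finset.univ.filter (fun p => p.1 < p.2)

/-- Graph Laplacian `L = ∑_e w(e) Δ_e`. -/
def lap (n : ℕ) (w : Fin n → Fin n → ℝ) : Matrix (Fin n) (Fin n) ℝ :=
  ∑ p ∈ pairs n, w p.1 p.2 • edgeMat n p

/-- Sparsified Laplacian `(1/N) ∑_k Δ_{e_k}` built from `N` sampled edges. -/
def sparseLap (n N : ℕ) (q : Fin N → Fin n × Fin n) : Matrix (Fin n) (Fin n) ℝ :=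
  (N : ℝ)⁻¹ • ∑ k : Fin N, edgeMat n (q k)

/-- Quadratic form `x^⊤ A x`. -/
def quad {n : ℕ} (A : Matrix (Fin n) (Fin n) ℝ) (x : Fin n → ℝ) : ℝ :=
  ∑ i, ∑ j, x i * A i j * x j

/-- Squared Frobenius norm. -/
def frob2 {n : ℕ} (A : Matrix (Fin n) (Fin n) ℝ) : ℝ :=
  ∑ i, ∑ j, (A i j) ^ 2

/-- Trace inner product `⟪A,B⟫ = tr(A^⊤ B)`. -/
def mdot {n : ℕ} (A B : Matrix (Fin n) (Fin n) ℝ) : ℝ :=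
  ∑ i, ∑ j, A i j * B i j

/-- Euclidean inner product. -/
def dot {n : ℕ} (v u : Fin n → ℝ) : ℝ := ∑ i, v i * u i

/-- Vector of diagonal entries of the Laplacian (degrees). -/
def degVec (n : ℕ) (w : Fin n → Fin n → ℝ) : Fin n → ℝ := fun i => lap n w i i

/-- `ℓ_∞` norm of a vector. -/
def supNorm {n : ℕ} (v : Fin n → ℝ) : ℝ := ⨆ i, |v i|

/-- `ℓ_2` norm of a vector. -/
def l2Norm {n : ℕ} (v : Fin n → ℝ) : ℝ := Real.sqrt (∑ i, (v i) ^ 2)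

/-- Maximum absolute entry of a matrix. -/
def matSupNorm {n : ℕ} (A : Matrix (Fin n) (Fin n) ℝ) : ℝ := ⨆ i, ⨆ j, |A i j|

open Classical in
/-- Empirical `p`-quantile of the values `v 1, …, v B`: the smallest value `a₀` in the
list such that the fraction of list entries `≤ a₀` is at least `p`. -/
def empQuantile {B : ℕ} (v : Fin B → ℝ) (p : ℝ) : ℝ :=
  sInf {t : ℝ | (∃ b, v b = t) ∧
    p ≤ ((Finset.univ.filter (fun b => v b ≤ t)).card : ℝ) / (B : ℝ)}

/-- CDF of the standard normal distribution. -/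
def stdGaussCDF (t : ℝ) : ℝ := ((gaussianReal 0 1) (Set.Iic t)).toReal

/-- Kolmogorov distance between the laws of real random variables `X` (on `(Ω₁,μ)`) and
`Y` (on `(Ω₂,ν)`). -/
def kolDist {Ω₁ Ω₂ : Type*} [MeasurableSpace Ω₁] [MeasurableSpace Ω₂]
    (μ : Measure Ω₁) (ν : Measure Ω₂) (X : Ω₁ → ℝ) (Y : Ω₂ → ℝ) : ℝ :=
  ⨆ t : ℝ, |(μ {ω | X ω ≤ t}).toReal - (ν {ω | Y ω ≤ t}).toReal|

/-- Kolmogorov distance between the law of `X` and the standard normal law. -/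
def kolStdGauss {Ω : Type*} [MeasurableSpace Ω] (μ : Measure Ω) (X : Ω → ℝ) : ℝ :=
  ⨆ t : ℝ, |(μ {ω | X ω ≤ t}).toReal - stdGaussCDF t|

/-- `G` is a centered Gaussian random vector with covariance matrix `R`:
every linear combination of coordinates is a centered Gaussian with the induced variance. -/
def IsGaussianVec {Ω : Type*} [MeasurableSpace Ω] (μ : Measure Ω) {m : ℕ}
    (G : Ω → Fin m → ℝ) (R : Matrix (Fin m) (Fin m) ℝ) : Prop :=
  ∀ c : Fin m → ℝ,
    Measure.map (fun ω => ∑ i, c i * G ω i) μ =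
      gaussianReal 0 (Real.toNNReal (∑ i, ∑ j, c i * R i j * c j))

/-- Convergence in distribution to the standard normal law, for a sequence of real random
variables defined on (possibly varying) probability spaces, expressed via CDFs (the standard
normal CDF is everywhere continuous, so this is equivalent to weak convergence). -/
def TendstoStdGauss (Ω : ℕ → Type) [∀ n, MeasurableSpace (Ω n)]
    (μ : ∀ n, Measure (Ω n)) (X : ∀ n, Ω n → ℝ) : Prop :=
  ∀ t : ℝ, Tendsto (fun n => ((μ n) {ω | X n ω ≤ t}).toReal) atTop (nhds (stdGaussCDF t))

/-- Convergence to `0` in probability for a sequence of real random variables on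
(possibly varying) probability spaces. -/
def TendstoP0 (Ω : ℕ → Type) [∀ n, MeasurableSpace (Ω n)]
    (μ : ∀ n, Measure (Ω n)) (X : ∀ n, Ω n → ℝ) : Prop :=
  ∀ ε : ℝ, 0 < ε →
    Tendsto (fun n => ((μ n) {ω | ε ≤ |X n ω|}).toReal) atTop (nhds 0)

end GS

namespace GS

/-- Empirical covariance `ŝ(x,y) = (1/N) ∑_k (x^⊤Q_k x)(y^⊤Q_k y) - (x^⊤L̂x)(y^⊤L̂y)`. -/
def sHat (n N : ℕ) (q : Fin N → Fin n × Fin n) (xv yv : Fin n → ℝ) : ℝ :=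
  (N : ℝ)⁻¹ * ∑ k : Fin N, GS.quad (GS.edgeMat n (q k)) xv * GS.quad (GS.edgeMat n (q k)) yv
    - GS.quad (GS.sparseLap n N q) xv * GS.quad (GS.sparseLap n N q) yv

end GS

namespace GS
open Real

lemma quad_edgeMat {n : ℕ} (p : Fin n × Fin n) (x : Fin n → ℝ) :
    quad (edgeMat n p) x = (x p.1 - x p.2)^2 := by
  have h : ∀ v : Fin n → ℝ, quad (Matrix.vecMulVec v v) x = (∑ i, x i * v i)^2 := by
    intro v
    simp only [quad, Matrix.vecMulVec_apply, sq, Finset.sum_mul, Finset.mul_sum]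
    apply Finset.sum_congr rfl; intro i _; apply Finset.sum_congr rfl; intro j _; ring
  rw [edgeMat, h]
  congr 1
  simp only [edgeVec, mul_sub, Finset.sum_sub_distrib, mul_ite, mul_one, mul_zero]
  simp [Finset.sum_ite_eq']

lemma quad_smul {n : ℕ} (a : ℝ) (A : Matrix (Fin n) (Fin n) ℝ) (x : Fin n → ℝ) :
    quad (a • A) x = a * quad A x := by
  simp only [quad, Matrix.smul_apply, smul_eq_mul, Finset.mul_sum]
  apply Finset.sum_congr rfl; intro i _; apply Finset.sum_congr rfl; intro j _; ring

lemma quad_add {n : ℕ} (A B : Matrix (Fin n) (Fin n) ℝ) (x : Fin n → ℝ) :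
    quad (A + B) x = quad A x + quad B x := by
  simp only [quad, Matrix.add_apply, ← Finset.sum_add_distrib]
  apply Finset.sum_congr rfl; intro i _; apply Finset.sum_congr rfl; intro j _; ring

lemma quad_zero {n : ℕ} (x : Fin n → ℝ) : quad (0 : Matrix (Fin n) (Fin n) ℝ) x = 0 := by
  simp [quad]

lemma quad_sum {n : ℕ} {ι : Type*} (S : Finset ι) (A : ι → Matrix (Fin n) (Fin n) ℝ)
    (x : Fin n → ℝ) : quad (∑ p ∈ S, A p) x = ∑ p ∈ S, quad (A p) x := by
  classical
  induction S using Finset.induction_on with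
  | empty => simp [quad_zero]
  | insert _ _ h ih => rw [Finset.sum_insert h, Finset.sum_insert h, quad_add, ih]

lemma quad_lap {n : ℕ} (w : Fin n → Fin n → ℝ) (x : Fin n → ℝ) :
    quad (lap n w) x = ∑ p ∈ pairs n, w p.1 p.2 * (x p.1 - x p.2)^2 := by
  rw [lap, quad_sum]
  simp [quad_smul, quad_edgeMat]

lemma quad_sparseLap {n N : ℕ} (q : Fin N → Fin n × Fin n) (x : Fin n → ℝ) :
    quad (sparseLap n N q) x = (N:ℝ)⁻¹ * ∑ k, (x (q k).1 - x (q k).2)^2 := by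
  rw [sparseLap, quad_smul, quad_sum]
  simp [quad_edgeMat]


variable {Ω : Type*} [MeasurableSpace Ω] {μ : Measure Ω} [IsProbabilityMeasure μ]

lemma integrable_of_bdd {X : Ω → ℝ} (hm : Measurable X) {C : ℝ} (hb : ∀ ω, |X ω| ≤ C) :
    Integrable X μ := by
  refine (integrable_const C).mono' hm.aestronglyMeasurable (ae_of_all _ ?_)
  simpa [Real.norm_eq_abs] using hb

lemma exp_interp {t x : ℝ} (hx : x ∈ Set.Icc (-1:ℝ) 1) :
    Real.exp (t * x) ≤ (Real.exp (-t) + Real.exp t)/2 + x * ((Real.exp t - Real.exp (-t))/2) := by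
  obtain ⟨h1, h2⟩ := hx
  have ha : (0:ℝ) ≤ (1 - x)/2 := by linarith
  have hb : (0:ℝ) ≤ (1 + x)/2 := by linarith
  have hab : (1 - x)/2 + (1 + x)/2 = 1 := by ring
  have := convexOn_exp.2 (Set.mem_univ (-t)) (Set.mem_univ t) ha hb hab
  simp only [smul_eq_mul] at this
  have harg : (1 - x)/2 * (-t) + (1 + x)/2 * t = t * x := by ring
  rw [harg] at this
  calc Real.exp (t * x) ≤ (1 - x)/2 * Real.exp (-t) + (1 + x)/2 * Real.exp t := this
    _ = (Real.exp (-t) + Real.exp t)/2 + x * ((Real.exp t - Real.exp (-t))/2) := by ring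

lemma mgf_le_exp_half_sq {X : Ω → ℝ} (hm : Measurable X) (hb : ∀ ω, X ω ∈ Set.Icc (-1:ℝ) 1)
    (h0 : ∫ ω, X ω ∂μ = 0) (t : ℝ) : mgf X μ t ≤ Real.exp (t^2/2) := by
  have hXint : Integrable X μ := integrable_of_bdd hm (fun ω => abs_le.2 (hb ω))
  have hint1 : Integrable (fun ω => Real.exp (t * X ω)) μ := by
    refine integrable_of_bdd ((hm.const_mul t).exp) (C := Real.exp |t|) (fun ω => ?_)
    rw [abs_of_pos (Real.exp_pos _), Real.exp_le_exp]
    calc t * X ω ≤ |t * X ω| := le_abs_self _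
      _ = |t| * |X ω| := abs_mul _ _
      _ ≤ |t| * 1 := by
          exact mul_le_mul_of_nonneg_left (abs_le.2 (hb ω)) (abs_nonneg t)
      _ = |t| := mul_one _
  have hint2 : Integrable
      (fun ω => (Real.exp (-t) + Real.exp t)/2 + X ω * ((Real.exp t - Real.exp (-t))/2)) μ :=
    (integrable_const _).add (hXint.mul_const _)
  calc mgf X μ t = ∫ ω, Real.exp (t * X ω) ∂μ := rfl
    _ ≤ ∫ ω, ((Real.exp (-t) + Real.exp t)/2 + X ω * ((Real.exp t - Real.exp (-t))/2)) ∂μ :=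
        integral_mono hint1 hint2 (fun ω => exp_interp (hb ω))
    _ = (Real.exp (-t) + Real.exp t)/2 := by
        rw [integral_add (integrable_const _) (hXint.mul_const _), integral_const,
          integral_mul_const, h0]
        simp
    _ = Real.cosh t := by rw [Real.cosh_eq]; ring_nf
    _ ≤ Real.exp (t^2/2) := Real.cosh_le_exp_half_sq t

lemma hoeff_sum {N : ℕ} (hN : 0 < N) {Z : Fin N → Ω → ℝ}
    (hind : iIndepFun Z μ) (hm : ∀ k, Measurable (Z k))
    (hb : ∀ k ω, Z k ω ∈ Set.Icc (-1:ℝ) 1) (h0 : ∀ k, ∫ ω, Z k ω ∂μ = 0)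
    {a : ℝ} (ha : 0 ≤ a) :
    (μ {ω | a ≤ ∑ k, Z k ω}).toReal ≤ Real.exp (-a^2/(2*N)) := by
  have hNR : (0:ℝ) < N := Nat.cast_pos.2 hN
  set t : ℝ := a / N with ht_def
  have ht : 0 ≤ t := div_nonneg ha hNR.le
  set S : Ω → ℝ := fun ω => ∑ k, Z k ω with hS_def
  have hSm : Measurable S := Finset.measurable_sum Finset.univ (fun k _ => hm k)
  have hSb : ∀ ω, |S ω| ≤ N := by
    intro ω
    calc |∑ k, Z k ω| ≤ ∑ k, |Z k ω| := Finset.abs_sum_le_sum_abs _ _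
      _ ≤ ∑ _k : Fin N, (1:ℝ) := Finset.sum_le_sum (fun k _ => abs_le.2 (hb k ω))
      _ = N := by simp
  have hint : Integrable (fun ω => Real.exp (t * S ω)) μ := by
    refine integrable_of_bdd ((hSm.const_mul t).exp) (C := Real.exp (|t| * N)) (fun ω => ?_)
    rw [abs_of_pos (Real.exp_pos _), Real.exp_le_exp]
    calc t * S ω ≤ |t * S ω| := le_abs_self _
      _ = |t| * |S ω| := abs_mul _ _
      _ ≤ |t| * N := mul_le_mul_of_nonneg_left (hSb ω) (abs_nonneg t)
  have hcher := measure_ge_le_exp_mul_mgf (μ := μ) (X := S) a ht hint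
  have hmgf : mgf S μ t ≤ Real.exp (N * t^2/2) := by
    have hSeq : S = ∑ k, Z k := by rw [hS_def, ← Finset.sum_fn]
    rw [hSeq, hind.mgf_sum hm]
    calc ∏ k, mgf (Z k) μ t ≤ ∏ _k : Fin N, Real.exp (t^2/2) :=
          Finset.prod_le_prod (fun k _ => mgf_nonneg) (fun k _ =>
            mgf_le_exp_half_sq (hm k) (hb k) (h0 k) t)
      _ = Real.exp (N * t^2/2) := by
          rw [Finset.prod_const, ← Real.exp_nat_mul]
          congr 1
          rw [Finset.card_univ, Fintype.card_fin]
          ring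
  calc (μ {ω | a ≤ S ω}).toReal ≤ Real.exp (-t * a) * mgf S μ t := hcher
    _ ≤ Real.exp (-t * a) * Real.exp (N * t^2/2) :=
        mul_le_mul_of_nonneg_left hmgf (Real.exp_pos _).le
    _ = Real.exp (-t * a + N * t^2/2) := (Real.exp_add _ _).symm
    _ = Real.exp (-a^2/(2*N)) := by
        congr 1
        rw [ht_def]
        field_simp
        ring

lemma integral_comp_finite {α : Type*} [Fintype α] [MeasurableSpace α]
    [MeasurableSingletonClass α] {e : Ω → α} (he : Measurable e) (f : α → ℝ) :
    ∫ ω, f (e ω) ∂μ = ∑ p, f p * (μ {ω | e ω = p}).toReal := by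
  have hmap : IsProbabilityMeasure (μ.map e) := Measure.isProbabilityMeasure_map he.aemeasurable
  have h1 : ∫ ω, f (e ω) ∂μ = ∫ p, f p ∂(μ.map e) :=
    (integral_map he.aemeasurable (measurable_of_countable f).aestronglyMeasurable).symm
  rw [h1, integral_fintype (.of_finite)]
  refine Finset.sum_congr rfl (fun p _ => ?_)
  rw [Measure.real, Measure.map_apply he (measurableSet_singleton p)]
  rw [smul_eq_mul, mul_comm]
  rfl

/-- Two-sided Hoeffding bound for the empirical mean of i.i.d. `[0,1]`-valued functions of
independent finitely-valued random variables. -/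
lemma hoeff_mean {α : Type*} [Fintype α] [MeasurableSpace α] [MeasurableSingletonClass α]
    {N : ℕ} (hN : 0 < N) {e : Fin N → Ω → α}
    (hind : iIndepFun e μ) (hemeas : ∀ k, Measurable (e k))
    {f : α → ℝ} (hf : ∀ p, f p ∈ Set.Icc (0:ℝ) 1) {c : ℝ}
    (hc : ∀ k, ∫ ω, f (e k ω) ∂μ = c) {tt : ℝ} (htt : 0 ≤ tt) :
    μ {ω | tt < |(N:ℝ)⁻¹ * ∑ k, f (e k ω) - c|} ≤
      ENNReal.ofReal (2 * Real.exp (-(N * tt^2)/2)) := by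
  have hNR : (0:ℝ) < N := Nat.cast_pos.2 hN
  have hc01 : c ∈ Set.Icc (0:ℝ) 1 := by
    obtain ⟨k⟩ : Nonempty (Fin N) := ⟨⟨0, hN⟩⟩
    have hint : Integrable (fun ω => f (e k ω)) μ :=
      integrable_of_bdd ((measurable_of_countable f).comp (hemeas k))
        (C := 1) (fun ω => abs_le.2 ⟨by linarith [(hf (e k ω)).1], (hf (e k ω)).2⟩)
    constructor
    · rw [← hc k]; exact integral_nonneg (fun ω => (hf (e k ω)).1)
    · rw [← hc k]
      calc ∫ ω, f (e k ω) ∂μ ≤ ∫ _ω, (1:ℝ) ∂μ :=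
            integral_mono hint (integrable_const 1) (fun ω => (hf (e k ω)).2)
        _ = 1 := by simp
  set Z : Fin N → Ω → ℝ := fun k ω => f (e k ω) - c with hZ_def
  have hZind : iIndepFun Z μ :=
    hind.comp (fun _ p => f p - c) (fun _ => measurable_of_countable _)
  have hZm : ∀ k, Measurable (Z k) :=
    fun k => ((measurable_of_countable f).comp (hemeas k)).sub measurable_const
  have hZb : ∀ k ω, Z k ω ∈ Set.Icc (-1:ℝ) 1 := by
    intro k ω
    constructor
    · have := (hf (e k ω)).1; have := hc01.2; simp only [hZ_def]; linarith
    · have := (hf (e k ω)).2; have := hc01.1; simp only [hZ_def]; linarith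
  have hZ0 : ∀ k, ∫ ω, Z k ω ∂μ = 0 := by
    intro k
    have hint : Integrable (fun ω => f (e k ω)) μ :=
      integrable_of_bdd ((measurable_of_countable f).comp (hemeas k))
        (C := 1) (fun ω => abs_le.2 ⟨by linarith [(hf (e k ω)).1], (hf (e k ω)).2⟩)
    simp only [hZ_def]
    rw [integral_sub hint (integrable_const c), hc k, integral_const]
    simp
  have hnegind : iIndepFun (fun k => -(Z k)) μ :=
    hZind.comp (fun _ x => -x) (fun _ => measurable_neg)
  have hsub : {ω | tt < |(N:ℝ)⁻¹ * ∑ k, f (e k ω) - c|} ⊆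
      {ω | (N:ℝ) * tt ≤ ∑ k, Z k ω} ∪ {ω | (N:ℝ) * tt ≤ ∑ k, (-(Z k)) ω} := by
    intro ω hω
    simp only [Set.mem_setOf_eq] at hω
    have key : (N:ℝ)⁻¹ * ∑ k, f (e k ω) - c = (N:ℝ)⁻¹ * ∑ k, Z k ω := by
      simp only [hZ_def]
      rw [Finset.sum_sub_distrib, Finset.sum_const, Finset.card_univ, Fintype.card_fin, nsmul_eq_mul]
      field_simp
    rw [key] at hω
    have habs : (N:ℝ) * tt < |∑ k, Z k ω| := by
      have h2 : |(N:ℝ)⁻¹ * ∑ k, Z k ω| = (N:ℝ)⁻¹ * |∑ k, Z k ω| := by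
        rw [abs_mul, abs_of_pos (inv_pos.2 hNR)]
      rw [h2] at hω
      calc (N:ℝ) * tt < (N:ℝ) * ((N:ℝ)⁻¹ * |∑ k, Z k ω|) :=
            (mul_lt_mul_iff_right₀ hNR).2 hω
        _ = |∑ k, Z k ω| := by field_simp
    rcases lt_abs.1 habs with h | h
    · exact Or.inl h.le
    · refine Or.inr ?_
      simp only [Set.mem_setOf_eq, Pi.neg_apply, Finset.sum_neg_distrib]
      exact h.le
  have hexp : -((N:ℝ)*tt)^2/(2*(N:ℝ)) = -((N:ℝ) * tt^2)/2 := by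
    field_simp
  have hA : μ {ω | (N:ℝ) * tt ≤ ∑ k, Z k ω} ≤ ENNReal.ofReal (Real.exp (-((N:ℝ)*tt^2)/2)) := by
    rw [ENNReal.le_ofReal_iff_toReal_le (measure_ne_top μ _) (Real.exp_pos _).le, ← hexp]
    exact hoeff_sum hN hZind hZm hZb hZ0 (mul_nonneg hNR.le htt)
  have hB : μ {ω | (N:ℝ) * tt ≤ ∑ k, (-(Z k)) ω} ≤
      ENNReal.ofReal (Real.exp (-((N:ℝ)*tt^2)/2)) := by
    rw [ENNReal.le_ofReal_iff_toReal_le (measure_ne_top μ _) (Real.exp_pos _).le, ← hexp]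
    refine hoeff_sum hN hnegind (fun k => (hZm k).neg) (fun k ω => ?_) (fun k => ?_)
      (mul_nonneg hNR.le htt)
    · obtain ⟨u1, u2⟩ := hZb k ω
      constructor <;> simp only [Pi.neg_apply] <;> linarith
    · simp only [Pi.neg_apply]
      rw [integral_neg, hZ0 k, neg_zero]
  calc μ {ω | tt < |(N:ℝ)⁻¹ * ∑ k, f (e k ω) - c|} ≤
      μ ({ω | (N:ℝ) * tt ≤ ∑ k, Z k ω} ∪ {ω | (N:ℝ) * tt ≤ ∑ k, (-(Z k)) ω}) :=
        measure_mono hsub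
    _ ≤ μ {ω | (N:ℝ) * tt ≤ ∑ k, Z k ω} + μ {ω | (N:ℝ) * tt ≤ ∑ k, (-(Z k)) ω} :=
        measure_union_le _ _
    _ ≤ ENNReal.ofReal (Real.exp (-((N:ℝ)*tt^2)/2)) +
        ENNReal.ofReal (Real.exp (-((N:ℝ)*tt^2)/2)) := add_le_add hA hB
    _ = ENNReal.ofReal (2 * Real.exp (-((N:ℝ) * tt^2)/2)) := by
        rw [← ENNReal.ofReal_add (Real.exp_pos _).le (Real.exp_pos _).le]
        congr 1
        ring


lemma union_bound {M : ℕ} (S : Fin M → Set Ω) {B : ℝ} (hB : 0 ≤ B)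
    (h : ∀ i, μ (S i) ≤ ENNReal.ofReal B) : μ (⋃ i, S i) ≤ ENNReal.ofReal (M * B) := by
  calc μ (⋃ i, S i) ≤ ∑' i, μ (S i) := measure_iUnion_le S
    _ = ∑ i, μ (S i) := tsum_fintype _
    _ ≤ ∑ _i : Fin M, ENNReal.ofReal B := Finset.sum_le_sum (fun i _ => h i)
    _ = (M : ℝ≥0∞) * ENNReal.ofReal B := by
        rw [Finset.sum_const, Finset.card_univ, Fintype.card_fin, nsmul_eq_mul]
    _ = ENNReal.ofReal (M * B) := by
        rw [← ENNReal.ofReal_natCast M, ← ENNReal.ofReal_mul (Nat.cast_nonneg M)]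

lemma ratio_perturb {a b c a' b' c' η δ : ℝ}
    (hη : 0 < η) (hb : η ≤ b) (hc : η ≤ c) (hb1 : b ≤ 1) (hc1 : c ≤ 1)
    (ha : |a| ≤ Real.sqrt (b*c))
    (hda : |a' - a| ≤ δ) (hdb : |b' - b| ≤ δ) (hdc : |c' - c| ≤ δ)
    (hδ : 2*δ ≤ η) :
    |a' / Real.sqrt (b'*c') - a / Real.sqrt (b*c)| ≤ 12*δ/η := by
  have hδ0 : 0 ≤ δ := le_trans (abs_nonneg _) hda
  have hdb' := abs_le.1 hdb
  have hdc' := abs_le.1 hdc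
  have hb0 : 0 < b := lt_of_lt_of_le hη hb
  have hc0 : 0 < c := lt_of_lt_of_le hη hc
  have hb'l : b/2 ≤ b' := by linarith
  have hc'l : c/2 ≤ c' := by linarith
  have hb'u : b' ≤ 3*b/2 := by linarith
  have hb'0 : 0 < b' := by linarith
  have hc'0 : 0 < c' := by linarith
  have hbc0 : 0 < b*c := mul_pos hb0 hc0
  have hb'c'0 : 0 < b'*c' := mul_pos hb'0 hc'0
  have hbc4 : b*c/4 ≤ b'*c' := by nlinarith
  set P := Real.sqrt (b*c) with hP_def
  set P' := Real.sqrt (b'*c') with hP'_def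
  have hP0 : 0 < P := Real.sqrt_pos.2 hbc0
  have hP'0 : 0 < P' := Real.sqrt_pos.2 hb'c'0
  have hPsq : P^2 = b*c := Real.sq_sqrt hbc0.le
  have hP'sq : P'^2 = b'*c' := Real.sq_sqrt hb'c'0.le
  have hPη : η ≤ P := by
    rw [hP_def, Real.le_sqrt hη.le hbc0.le]
    nlinarith
  have hP'l : P/2 ≤ P' := by
    rw [hP'_def, Real.le_sqrt (by positivity) hb'c'0.le]
    rw [div_pow, hPsq]
    linarith
  -- key decomposition
  have hkey : a' / P' - a / P = (a' - a)/P' + a * (P - P')/(P' * P) := by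
    field_simp
    ring
  have hT1 : |a' - a|/P' ≤ 2*δ/η := by
    have h1 : |a' - a|/P' ≤ δ/(η/2) :=
      div_le_div₀ hδ0 hda (by linarith) (by linarith)
    calc |a' - a|/P' ≤ δ/(η/2) := h1
      _ = 2*δ/η := by field_simp
  have hstepA : |P - P'| * (P + P') = |b*c - b'*c'| := by
    have : (P - P') * (P + P') = b*c - b'*c' := by linear_combination hPsq - hP'sq
    calc |P - P'| * (P + P') = |(P - P') * (P + P')| := by
          rw [abs_mul, abs_of_pos (by linarith : (0:ℝ) < P + P')]
      _ = |b*c - b'*c'| := by rw [this]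
  have hstepB : |P - P'| * P' ≤ |b*c - b'*c'| := by
    calc |P - P'| * P' ≤ |P - P'| * (P + P') :=
          mul_le_mul_of_nonneg_left (by linarith) (abs_nonneg _)
      _ = |b*c - b'*c'| := hstepA
  have hstepD : |b*c - b'*c'| ≤ δ*c + b'*δ := by
    have h1 : b*c - b'*c' = (b - b')*c + b'*(c - c') := by ring
    calc |b*c - b'*c'| = |(b - b')*c + b'*(c - c')| := by rw [h1]
      _ ≤ |(b - b')*c| + |b'*(c - c')| := abs_add_le _ _
      _ = |b - b'| * c + b' * |c - c'| := by
          rw [abs_mul, abs_mul, abs_of_pos hc0, abs_of_pos hb'0]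
      _ ≤ δ*c + b'*δ := by
          have h2 : |b - b'| ≤ δ := by rw [abs_sub_comm]; exact hdb
          have h3 : |c - c'| ≤ δ := by rw [abs_sub_comm]; exact hdc
          have := mul_le_mul_of_nonneg_right h2 hc0.le
          have := mul_le_mul_of_nonneg_left h3 hb'0.le
          linarith
  have hT2 : |a| * |P - P'| / (P' * P) ≤ 10*δ/η := by
    have h1 : |a| * |P - P'| ≤ P * (|b*c - b'*c'|/P') := by
      have h2 : |P - P'| ≤ |b*c - b'*c'|/P' := by
        rw [le_div_iff₀ hP'0]; exact hstepB
      exact mul_le_mul ha h2 (abs_nonneg _) hP0.le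
    have h3 : |a| * |P - P'| / (P' * P) ≤ (P * (|b*c - b'*c'|/P'))/(P' * P) :=
      (div_le_div_iff_of_pos_right (by positivity)).2 h1
    have h4 : (P * (|b*c - b'*c'|/P'))/(P' * P) = |b*c - b'*c'|/(b'*c') := by
      rw [← hP'sq]; field_simp
    have h5 : |b*c - b'*c'|/(b'*c') ≤ (δ*c + b'*δ)/(b'*c') :=
      (div_le_div_iff_of_pos_right hb'c'0).2 hstepD
    have h6 : (δ*c + b'*δ)/(b'*c') ≤ 10*δ/η := by
      rw [div_le_div_iff₀ hb'c'0 hη]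
      have e1 : δ*(η*c) ≤ δ*(b*c) :=
        mul_le_mul_of_nonneg_left (mul_le_mul_of_nonneg_right hb hc0.le) hδ0
      have e2 : b'*η ≤ (3*b/2)*c := by
        calc b'*η ≤ (3*b/2)*η := mul_le_mul_of_nonneg_right hb'u hη.le
          _ ≤ (3*b/2)*c := mul_le_mul_of_nonneg_left hc (by linarith)
      have e3 : δ*(b'*η) ≤ δ*((3*b/2)*c) := mul_le_mul_of_nonneg_left e2 hδ0
      have e4' : δ * (b*c/4) ≤ δ*(b'*c') := mul_le_mul_of_nonneg_left hbc4 hδ0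
      have e4 : δ*(b*c) ≤ 4*(δ*(b'*c')) := by linarith
      linarith [e1, e3, e4]
    rw [h4] at h3
    linarith
  calc |a' / P' - a / P| = |(a' - a)/P' + a * (P - P')/(P' * P)| := by rw [hkey]
    _ ≤ |(a' - a)/P'| + |a * (P - P')/(P' * P)| := abs_add_le _ _
    _ = |a' - a|/P' + |a| * |P - P'| / (P' * P) := by
        rw [abs_div, abs_div, abs_mul, abs_of_pos hP'0, abs_of_pos (mul_pos hP'0 hP0)]
    _ ≤ 2*δ/η + 10*δ/η := add_le_add hT1 hT2
    _ = 12*δ/η := by ring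

end GS

namespace GS
open Real

set_option maxHeartbeats 2000000 in
lemma core (n N' : ℕ) (hN1 : 1 ≤ N') (hn2 : 2 ≤ n)
    (w' : Fin n → Fin n → ℝ) (hw0' : ∀ i j, 0 ≤ w' i j)
    (hw1' : ∑ p ∈ pairs n, w' p.1 p.2 = 1)
    {Ω : Type} [MeasurableSpace Ω] (μ : Measure Ω) [IsProbabilityMeasure μ]
    (e' : Fin N' → Ω → Fin n × Fin n) (hemeas' : ∀ k, Measurable (e' k))
    (heind' : iIndepFun e' μ)
    (hedist' : ∀ k p, μ {ω | e' k ω = p} = if p.1 < p.2 then ENNReal.ofReal (w' p.1 p.2) else 0)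
    (m' : ℕ) (hm' : 0 < m') (x' : Fin m' → Fin n → ℝ)
    (hx' : ∀ i k, x' i k = 0 ∨ x' i k = 1)
    (s' : Fin m' → Fin m' → ℝ)
    (hs' : ∀ i j, s' i j =
      (∫ ω, quad (edgeMat n (e' ⟨0, hN1⟩ ω)) (x' i) * quad (edgeMat n (e' ⟨0, hN1⟩ ω)) (x' j) ∂μ)
        - (∫ ω, quad (edgeMat n (e' ⟨0, hN1⟩ ω)) (x' i) ∂μ)
          * (∫ ω, quad (edgeMat n (e' ⟨0, hN1⟩ ω)) (x' j) ∂μ))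
    (ε Lr ηr : ℝ) (hε : 0 < ε) (hLr1 : 1 ≤ Lr) (hLm : Real.log m' ≤ Lr) (hLεs : ε ≤ Lr^2)
    (hηr : ηr = ⨅ i : Fin m', quad (lap n w') (x' i) * (1 - quad (lap n w') (x' i)))
    (hη5 : Lr^5 ≤ Real.sqrt N' * ηr) :
    (μ {ω | ε ≤ |(⨆ i : Fin m', ⨆ j : Fin m',
        |sHat n N' (fun k => e' k ω) (x' i) (x' j)
            / Real.sqrt (sHat n N' (fun k => e' k ω) (x' i) (x' i)
                * sHat n N' (fun k => e' k ω) (x' j) (x' j))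
          - s' i j / Real.sqrt (s' i i * s' j j)|)
        * (Real.log m')^2|}).toReal
      ≤ 4 * (m':ℝ)^2 * Real.exp (-((N':ℝ) * (ε * ηr / (100 * Lr^2))^2)/2) := by
  classical
  have hN0 : 0 < N' := hN1
  have hNR : (0:ℝ) < N' := by exact_mod_cast hN1
  haveI : Nonempty (Fin m') := ⟨⟨0, hm'⟩⟩
  have hmR : (1:ℝ) ≤ m' := by exact_mod_cast hm'
  have hLr0 : (0:ℝ) < Lr := lt_of_lt_of_le one_pos hLr1
  have hsN : (0:ℝ) < Real.sqrt N' := Real.sqrt_pos.2 hNR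
  have hηpos : 0 < ηr := by
    by_contra hcon
    push_neg at hcon
    have h1 : Real.sqrt N' * ηr ≤ 0 := mul_nonpos_of_nonneg_of_nonpos hsN.le hcon
    have h2 : (0:ℝ) < Lr^5 := by positivity
    linarith
  set t : ℝ := ε * ηr / (100 * Lr^2) with ht_def
  have htpos : 0 < t := by positivity
  set cf : Fin m' → Fin n × Fin n → ℝ := fun i p => (x' i p.1 - x' i p.2)^2 with hcf_def
  have hcf01 : ∀ i p, cf i p = 0 ∨ cf i p = 1 := by
    intro i p
    rcases hx' i p.1 with h1 | h1 <;> rcases hx' i p.2 with h2 | h2 <;>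
      [left; right; right; left] <;> (simp only [hcf_def, h1, h2]; norm_num)
  have hcfIcc : ∀ i p, cf i p ∈ Set.Icc (0:ℝ) 1 := by
    intro i p; rcases hcf01 i p with h | h <;> rw [h] <;> norm_num
  have hcfsq : ∀ i p, cf i p * cf i p = cf i p := by
    intro i p; rcases hcf01 i p with h | h <;> rw [h] <;> norm_num
  have hquadE : ∀ (i : Fin m') (p : Fin n × Fin n), quad (edgeMat n p) (x' i) = cf i p :=
    fun i p => quad_edgeMat p (x' i)
  have hEint : ∀ (k : Fin N') (f : Fin n × Fin n → ℝ),
      ∫ ω, f (e' k ω) ∂μ = ∑ p ∈ pairs n, w' p.1 p.2 * f p := by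
    intro k f
    rw [integral_comp_finite (hemeas' k) f, pairs, Finset.sum_filter]
    refine Finset.sum_congr rfl (fun p _ => ?_)
    rw [hedist' k p]
    split
    · rw [ENNReal.toReal_ofReal (hw0' p.1 p.2)]; ring
    · simp
  set q : Fin m' → ℝ := fun i => ∑ p ∈ pairs n, w' p.1 p.2 * cf i p with hq_def
  have hq_quad : ∀ i, quad (lap n w') (x' i) = q i := by
    intro i; rw [quad_lap]
  have hq01 : ∀ i, q i ∈ Set.Icc (0:ℝ) 1 := by
    intro i
    constructor
    · exact Finset.sum_nonneg fun p _ => mul_nonneg (hw0' p.1 p.2) (hcfIcc i p).1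
    · calc ∑ p ∈ pairs n, w' p.1 p.2 * cf i p ≤ ∑ p ∈ pairs n, w' p.1 p.2 :=
          Finset.sum_le_sum fun p _ => mul_le_of_le_one_right (hw0' p.1 p.2) (hcfIcc i p).2
        _ = 1 := hw1'
  set r : Fin m' → Fin m' → ℝ :=
    fun i j => ∑ p ∈ pairs n, w' p.1 p.2 * (cf i p * cf j p) with hr_def
  have hint_r : ∀ (k : Fin N') i j, ∫ ω, cf i (e' k ω) * cf j (e' k ω) ∂μ = r i j :=
    fun k i j => hEint k (fun p => cf i p * cf j p)
  have hint_q : ∀ (k : Fin N') i, ∫ ω, cf i (e' k ω) ∂μ = q i :=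
    fun k i => hEint k (cf i)
  have hs_eq : ∀ i j, s' i j = r i j - q i * q j := by
    intro i j
    rw [hs' i j]
    have e1 : (fun ω => quad (edgeMat n (e' ⟨0, hN1⟩ ω)) (x' i)
        * quad (edgeMat n (e' ⟨0, hN1⟩ ω)) (x' j))
        = fun ω => cf i (e' ⟨0, hN1⟩ ω) * cf j (e' ⟨0, hN1⟩ ω) := by
      funext ω; rw [hquadE, hquadE]
    have e2 : ∀ i' : Fin m', (fun ω => quad (edgeMat n (e' ⟨0, hN1⟩ ω)) (x' i'))
        = fun ω => cf i' (e' ⟨0, hN1⟩ ω) := by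
      intro i'; funext ω; rw [hquadE]
    rw [e1, e2 i, e2 j, hint_r, hint_q, hint_q]
  have hrii : ∀ i, r i i = q i := by
    intro i
    refine Finset.sum_congr rfl (fun p _ => ?_)
    rw [hcfsq i p]
  have hsii : ∀ i, s' i i = q i * (1 - q i) := by
    intro i; rw [hs_eq i i, hrii i]; ring
  have hη_le : ∀ i, ηr ≤ s' i i := by
    intro i
    rw [hsii i, ← hq_quad i, hηr]
    exact ciInf_le (Finite.bddBelow_range _) i
  have hsii1 : ∀ i, s' i i ≤ 1 := by
    intro i
    rw [hsii i]
    obtain ⟨h1, h2⟩ := hq01 i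
    nlinarith
  have hCS : ∀ i j, |s' i j| ≤ Real.sqrt (s' i i * s' j j) := by
    intro i j
    have hcent : ∀ i' j' : Fin m', s' i' j' = ∑ p ∈ pairs n,
        (Real.sqrt (w' p.1 p.2) * (cf i' p - q i'))
          * (Real.sqrt (w' p.1 p.2) * (cf j' p - q j')) := by
      intro i' j'
      have expand : ∀ p ∈ pairs n,
          (Real.sqrt (w' p.1 p.2) * (cf i' p - q i'))
            * (Real.sqrt (w' p.1 p.2) * (cf j' p - q j'))
          = w' p.1 p.2 * (cf i' p * cf j' p) - q i' * (w' p.1 p.2 * cf j' p)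
            - q j' * (w' p.1 p.2 * cf i' p) + (q i' * q j') * w' p.1 p.2 := by
        intro p _
        have hw : Real.sqrt (w' p.1 p.2) * Real.sqrt (w' p.1 p.2) = w' p.1 p.2 :=
          Real.mul_self_sqrt (hw0' p.1 p.2)
        linear_combination (cf i' p - q i') * (cf j' p - q j') * hw
      rw [hs_eq i' j', Finset.sum_congr rfl expand]
      rw [Finset.sum_add_distrib, Finset.sum_sub_distrib, Finset.sum_sub_distrib,
        ← Finset.mul_sum, ← Finset.mul_sum, ← Finset.mul_sum, hw1']
      have hqi : (∑ p ∈ pairs n, w' p.1 p.2 * cf i' p) = q i' := rfl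
      have hqj : (∑ p ∈ pairs n, w' p.1 p.2 * cf j' p) = q j' := rfl
      have hrr : (∑ p ∈ pairs n, w' p.1 p.2 * (cf i' p * cf j' p)) = r i' j' := rfl
      rw [hqi, hqj, hrr]
      ring
    have hCSsq : (s' i j)^2 ≤ s' i i * s' j j := by
      rw [hcent i j, hcent i i, hcent j j]
      have h := Finset.sum_mul_sq_le_sq_mul_sq (pairs n)
        (fun p => Real.sqrt (w' p.1 p.2) * (cf i p - q i))
        (fun p => Real.sqrt (w' p.1 p.2) * (cf j p - q j))
      calc (∑ p ∈ pairs n, (Real.sqrt (w' p.1 p.2) * (cf i p - q i))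
            * (Real.sqrt (w' p.1 p.2) * (cf j p - q j)))^2
          ≤ (∑ p ∈ pairs n, (Real.sqrt (w' p.1 p.2) * (cf i p - q i))^2)
            * (∑ p ∈ pairs n, (Real.sqrt (w' p.1 p.2) * (cf j p - q j))^2) := h
        _ = (∑ p ∈ pairs n, (Real.sqrt (w' p.1 p.2) * (cf i p - q i))
              * (Real.sqrt (w' p.1 p.2) * (cf i p - q i)))
            * (∑ p ∈ pairs n, (Real.sqrt (w' p.1 p.2) * (cf j p - q j))
              * (Real.sqrt (w' p.1 p.2) * (cf j p - q j))) := by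
            simp only [sq]
    have h2 : |s' i j|^2 ≤ s' i i * s' j j := by rw [sq_abs]; exact hCSsq
    exact Real.le_sqrt_of_sq_le h2
  set E2 : ℝ := 2 * Real.exp (-((N':ℝ) * t^2)/2) with hE2_def
  have hE2nonneg : (0:ℝ) ≤ E2 := by positivity
  set A : Fin m' → Fin m' → Set Ω := fun i j =>
    {ω | t < |(N':ℝ)⁻¹ * ∑ k, cf i (e' k ω) * cf j (e' k ω) - r i j|} with hA_def
  set C : Fin m' → Set Ω := fun i =>
    {ω | t < |(N':ℝ)⁻¹ * ∑ k, cf i (e' k ω) - q i|} with hC_def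
  have hμA : ∀ i j, μ (A i j) ≤ ENNReal.ofReal E2 := by
    intro i j
    refine hoeff_mean hN0 heind' hemeas' (f := fun p => cf i p * cf j p) ?_
      (fun k => hint_r k i j) htpos.le
    intro p
    exact ⟨mul_nonneg (hcfIcc i p).1 (hcfIcc j p).1,
      mul_le_one₀ (hcfIcc i p).2 (hcfIcc j p).1 (hcfIcc j p).2⟩
  have hμC : ∀ i, μ (C i) ≤ ENNReal.ofReal E2 := by
    intro i
    exact hoeff_mean hN0 heind' hemeas' (f := cf i) (fun p => hcfIcc i p)
      (fun k => hint_q k i) htpos.le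
  have hlogm0 : 0 ≤ Real.log m' := Real.log_nonneg hmR
  have hsubset : {ω | ε ≤ |(⨆ i : Fin m', ⨆ j : Fin m',
        |sHat n N' (fun k => e' k ω) (x' i) (x' j)
            / Real.sqrt (sHat n N' (fun k => e' k ω) (x' i) (x' i)
                * sHat n N' (fun k => e' k ω) (x' j) (x' j))
          - s' i j / Real.sqrt (s' i i * s' j j)|)
        * (Real.log m')^2|}
      ⊆ (⋃ i, ⋃ j, A i j) ∪ ⋃ i, C i := by
    intro ω hω
    rw [Set.mem_setOf_eq] at hω
    by_contra hnot
    simp only [Set.mem_union, Set.mem_iUnion] at hnot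
    push_neg at hnot
    obtain ⟨hnA, hnC⟩ := hnot
    have hAb : ∀ i j, |(N':ℝ)⁻¹ * ∑ k, cf i (e' k ω) * cf j (e' k ω) - r i j| ≤ t := by
      intro i j
      have h := hnA i j
      simp only [hA_def, Set.mem_setOf_eq, not_lt] at h
      exact h
    have hCb : ∀ i, |(N':ℝ)⁻¹ * ∑ k, cf i (e' k ω) - q i| ≤ t := by
      intro i
      have h := hnC i
      simp only [hC_def, Set.mem_setOf_eq, not_lt] at h
      exact h
    set ph : Fin m' → ℝ := fun i => (N':ℝ)⁻¹ * ∑ k, cf i (e' k ω) with hph_def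
    set Yb : Fin m' → Fin m' → ℝ :=
      fun i j => (N':ℝ)⁻¹ * ∑ k, cf i (e' k ω) * cf j (e' k ω) with hYb_def
    have hph01 : ∀ i, ph i ∈ Set.Icc (0:ℝ) 1 := by
      intro i
      constructor
      · exact mul_nonneg (by positivity)
          (Finset.sum_nonneg fun k _ => (hcfIcc i _).1)
      · have h1 : ∑ k : Fin N', cf i (e' k ω) ≤ (N':ℝ) := by
          calc ∑ k : Fin N', cf i (e' k ω) ≤ ∑ _k : Fin N', (1:ℝ) :=
              Finset.sum_le_sum fun k _ => (hcfIcc i _).2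
            _ = N' := by simp
        calc (N':ℝ)⁻¹ * ∑ k, cf i (e' k ω) ≤ (N':ℝ)⁻¹ * N' :=
            mul_le_mul_of_nonneg_left h1 (by positivity)
          _ = 1 := by field_simp
    have hshat : ∀ i j, sHat n N' (fun k => e' k ω) (x' i) (x' j) = Yb i j - ph i * ph j := by
      intro i j
      simp only [sHat, quad_sparseLap, quad_edgeMat]
      rfl
    have hdev : ∀ i j, |sHat n N' (fun k => e' k ω) (x' i) (x' j) - s' i j| ≤ 3*t := by
      intro i j
      rw [hshat i j, hs_eq i j]
      have h1 : |Yb i j - r i j| ≤ t := hAb i j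
      have h2 : |ph i - q i| ≤ t := hCb i
      have h3 : |ph j - q j| ≤ t := hCb j
      have h4 : |ph i * ph j - q i * q j| ≤ 2*t := by
        have hd : ph i * ph j - q i * q j = (ph i - q i) * ph j + q i * (ph j - q j) := by ring
        have hphj : |ph j| ≤ 1 := by
          rw [abs_of_nonneg (hph01 j).1]; exact (hph01 j).2
        have hqi : |q i| ≤ 1 := by
          rw [abs_of_nonneg (hq01 i).1]; exact (hq01 i).2
        calc |ph i * ph j - q i * q j| = |(ph i - q i) * ph j + q i * (ph j - q j)| := by rw [hd]
          _ ≤ |(ph i - q i) * ph j| + |q i * (ph j - q j)| := abs_add_le _ _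
          _ = |ph i - q i| * |ph j| + |q i| * |ph j - q j| := by
              rw [abs_mul (ph i - q i) (ph j), abs_mul (q i) (ph j - q j)]
          _ ≤ t * 1 + 1 * t := by
              refine add_le_add (mul_le_mul h2 hphj (abs_nonneg _) htpos.le) ?_
              exact mul_le_mul hqi h3 (abs_nonneg _) one_pos.le
          _ = 2*t := by ring
      calc |Yb i j - ph i * ph j - (r i j - q i * q j)|
          = |(Yb i j - r i j) - (ph i * ph j - q i * q j)| := by
            congr 1; ring
        _ ≤ |Yb i j - r i j| + |ph i * ph j - q i * q j| := abs_sub _ _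
        _ ≤ t + 2*t := add_le_add h1 h4
        _ = 3*t := by ring
    have h6t : 2*(3*t) ≤ ηr := by
      have h : 6*(ε*ηr) ≤ ηr*(100*Lr^2) := by
        nlinarith [mul_le_mul_of_nonneg_right hLεs hηpos.le]
      calc 2*(3*t) = 6*(ε*ηr)/(100*Lr^2) := by rw [ht_def]; ring
        _ ≤ ηr := by rw [div_le_iff₀ (by positivity)]; linarith
    have hratio : ∀ i j, |sHat n N' (fun k => e' k ω) (x' i) (x' j)
            / Real.sqrt (sHat n N' (fun k => e' k ω) (x' i) (x' i)
                * sHat n N' (fun k => e' k ω) (x' j) (x' j))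
          - s' i j / Real.sqrt (s' i i * s' j j)| ≤ 36*t/ηr := by
      intro i j
      have h := ratio_perturb (a := s' i j) (b := s' i i) (c := s' j j)
        (a' := sHat n N' (fun k => e' k ω) (x' i) (x' j))
        (b' := sHat n N' (fun k => e' k ω) (x' i) (x' i))
        (c' := sHat n N' (fun k => e' k ω) (x' j) (x' j))
        (δ := 3*t)
        hηpos (hη_le i) (hη_le j) (hsii1 i) (hsii1 j) (hCS i j)
        (hdev i j) (hdev i i) (hdev j j) h6t
      calc |sHat n N' (fun k => e' k ω) (x' i) (x' j)
            / Real.sqrt (sHat n N' (fun k => e' k ω) (x' i) (x' i)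
                * sHat n N' (fun k => e' k ω) (x' j) (x' j))
          - s' i j / Real.sqrt (s' i i * s' j j)| ≤ 12*(3*t)/ηr := h
        _ = 36*t/ηr := by ring
    have hsup : (⨆ i : Fin m', ⨆ j : Fin m',
        |sHat n N' (fun k => e' k ω) (x' i) (x' j)
            / Real.sqrt (sHat n N' (fun k => e' k ω) (x' i) (x' i)
                * sHat n N' (fun k => e' k ω) (x' j) (x' j))
          - s' i j / Real.sqrt (s' i i * s' j j)|) ≤ 36*t/ηr :=
      ciSup_le fun i => ciSup_le fun j => hratio i j
    have hsup0 : (0:ℝ) ≤ ⨆ i : Fin m', ⨆ j : Fin m',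
        |sHat n N' (fun k => e' k ω) (x' i) (x' j)
            / Real.sqrt (sHat n N' (fun k => e' k ω) (x' i) (x' i)
                * sHat n N' (fun k => e' k ω) (x' j) (x' j))
          - s' i j / Real.sqrt (s' i i * s' j j)| := by
      refine le_ciSup_of_le (Finite.bddAbove_range _) ⟨0, hm'⟩ ?_
      exact le_ciSup_of_le (Finite.bddAbove_range _) ⟨0, hm'⟩ (abs_nonneg _)
    have hBIG : |(⨆ i : Fin m', ⨆ j : Fin m',
        |sHat n N' (fun k => e' k ω) (x' i) (x' j)
            / Real.sqrt (sHat n N' (fun k => e' k ω) (x' i) (x' i)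
                * sHat n N' (fun k => e' k ω) (x' j) (x' j))
          - s' i j / Real.sqrt (s' i i * s' j j)|)
        * (Real.log m')^2| < ε := by
      rw [abs_of_nonneg (mul_nonneg hsup0 (by positivity))]
      have hlog2 : (Real.log m')^2 ≤ Lr^2 := by
        exact pow_le_pow_left₀ hlogm0 hLm 2
      calc (⨆ i : Fin m', ⨆ j : Fin m',
          |sHat n N' (fun k => e' k ω) (x' i) (x' j)
              / Real.sqrt (sHat n N' (fun k => e' k ω) (x' i) (x' i)
                  * sHat n N' (fun k => e' k ω) (x' j) (x' j))
            - s' i j / Real.sqrt (s' i i * s' j j)|) * (Real.log m')^2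
          ≤ (36*t/ηr) * Lr^2 := by
            refine mul_le_mul hsup hlog2 (by positivity) (by positivity)
        _ = 36*ε/100 := by
            rw [ht_def]
            field_simp
        _ < ε := by linarith
    exact absurd hω (not_le.2 hBIG)
  have hmeasbound : μ {ω | ε ≤ |(⨆ i : Fin m', ⨆ j : Fin m',
        |sHat n N' (fun k => e' k ω) (x' i) (x' j)
            / Real.sqrt (sHat n N' (fun k => e' k ω) (x' i) (x' i)
                * sHat n N' (fun k => e' k ω) (x' j) (x' j))
          - s' i j / Real.sqrt (s' i i * s' j j)|)
        * (Real.log m')^2|}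
      ≤ ENNReal.ofReal (4 * (m':ℝ)^2 * Real.exp (-((N':ℝ)*t^2)/2)) := by
    calc μ _ ≤ μ ((⋃ i, ⋃ j, A i j) ∪ ⋃ i, C i) := measure_mono hsubset
      _ ≤ μ (⋃ i, ⋃ j, A i j) + μ (⋃ i, C i) := measure_union_le _ _
      _ ≤ ENNReal.ofReal ((m':ℝ) * ((m':ℝ) * E2)) + ENNReal.ofReal ((m':ℝ) * E2) := by
          refine add_le_add ?_ ?_
          · refine union_bound _ (mul_nonneg (Nat.cast_nonneg m') hE2nonneg) (fun i => ?_)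
            exact union_bound _ hE2nonneg (hμA i)
          · exact union_bound _ hE2nonneg hμC
      _ = ENNReal.ofReal ((m':ℝ) * ((m':ℝ) * E2) + (m':ℝ) * E2) := by
          rw [← ENNReal.ofReal_add (by positivity) (by positivity)]
      _ ≤ ENNReal.ofReal (4 * (m':ℝ)^2 * Real.exp (-((N':ℝ)*t^2)/2)) := by
          apply ENNReal.ofReal_le_ofReal
          rw [hE2_def]
          have hX : (0:ℝ) < Real.exp (-((N':ℝ)*t^2)/2) := Real.exp_pos _
          have hmm : (m':ℝ) ≤ (m':ℝ)^2 := by nlinarith [hmR]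
          have e : (m':ℝ) * Real.exp (-((N':ℝ)*t^2)/2)
              ≤ (m':ℝ)^2 * Real.exp (-((N':ℝ)*t^2)/2) :=
            mul_le_mul_of_nonneg_right hmm hX.le
          nlinarith [e]
  exact ENNReal.toReal_le_of_le_ofReal (by positivity) hmeasbound

end GS

open Asymptotics

/-- Lemma E.3. Under edge-weight sampling with `Nₙ → ∞` and
`log(Nₙ|𝒞ₙ|)⁵ = o(√Nₙ η(𝒞ₙ))`, the empirical correlation matrix `R̂`, with entries
`R̂_{ij} = ŝ_{ij}/√(ŝ_{ii}ŝ_{jj})`, satisfies `‖R̂ - R‖_∞ log(|𝒞ₙ|)² → 0` in probability,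
where `R_{ij} = s_{ij}/√(s_{ii}s_{jj})` and `‖·‖_∞` is the maximum absolute entry. -/
theorem stmt4
    (N : ℕ → ℕ) (w : ∀ n, Fin n → Fin n → ℝ)
    (hw0 : ∀ n i j, 0 ≤ w n i j)
    (hw1 : ∀ n, 2 ≤ n → ∑ p ∈ GS.pairs n, w n p.1 p.2 = 1)
    (Ωd : ℕ → Type) [∀ n, MeasurableSpace (Ωd n)]
    (μd : ∀ n, Measure (Ωd n)) (hμd : ∀ n, IsProbabilityMeasure (μd n))
    (e : ∀ n, Fin (N n) → Ωd n → Fin n × Fin n)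
    (hemeas : ∀ n k, Measurable (e n k))
    (heind : ∀ n, iIndepFun (e n) (μd n))
    (hedist : ∀ n, 2 ≤ n → ∀ k p, μd n {ω | e n k ω = p} =
      if p.1 < p.2 then ENNReal.ofReal (w n p.1 p.2) else 0)
    (m : ℕ → ℕ) (hm : ∀ n, 0 < m n)
    (x : ∀ n, Fin (m n) → Fin n → ℝ)
    (hx : ∀ n i k, x n i k = 0 ∨ x n i k = 1)
    (hxinj : ∀ n, Function.Injective (x n))
    (hN : Tendsto N atTop atTop)
    (hLO : (fun n : ℕ => (Real.log ((N n : ℝ) * (m n : ℝ))) ^ 5) =o[atTop]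
      (fun n : ℕ => Real.sqrt (N n) *
        ⨅ i : Fin (m n), GS.quad (GS.lap n (w n)) (x n i)
          * (1 - GS.quad (GS.lap n (w n)) (x n i))))
    (s : ∀ n, Fin (m n) → Fin (m n) → ℝ)
    (hs : ∀ n (k : Fin (N n)) i j, s n i j =
      (∫ ω, GS.quad (GS.edgeMat n (e n k ω)) (x n i)
          * GS.quad (GS.edgeMat n (e n k ω)) (x n j) ∂(μd n))
        - (∫ ω, GS.quad (GS.edgeMat n (e n k ω)) (x n i) ∂(μd n))
          * (∫ ω, GS.quad (GS.edgeMat n (e n k ω)) (x n j) ∂(μd n)))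
    :
    GS.TendstoP0 Ωd μd (fun n ωd =>
      (⨆ i : Fin (m n), ⨆ j : Fin (m n),
        |GS.sHat n (N n) (fun k => e n k ωd) (x n i) (x n j)
            / Real.sqrt (GS.sHat n (N n) (fun k => e n k ωd) (x n i) (x n i)
                * GS.sHat n (N n) (fun k => e n k ωd) (x n j) (x n j))
          - s n i j / Real.sqrt (s n i i * s n j j)|)
        * (Real.log (m n)) ^ 2) := by
  intro ε hε
  classical
  set L : ℕ → ℝ := fun n => Real.log ((N n : ℝ) * (m n : ℝ)) with hL_def
  have hLtop : Tendsto L atTop atTop := by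
    have h0 : Tendsto (fun n => ((N n : ℕ) : ℝ)) atTop atTop :=
      tendsto_natCast_atTop_atTop.comp hN
    have h1 : Tendsto (fun n => Real.log ((N n : ℕ) : ℝ)) atTop atTop :=
      Real.tendsto_log_atTop.comp h0
    refine tendsto_atTop_mono (fun n => ?_) h1
    rcases Nat.eq_zero_or_pos (N n) with h | h
    · simp [hL_def, h]
    · have hm1 : (1:ℝ) ≤ m n := by exact_mod_cast hm n
      have hN1 : (0:ℝ) < N n := by exact_mod_cast h
      apply Real.log_le_log hN1
      nlinarith
  set c6 : ℝ := ε^2/20000 with hc6_def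
  have hc6pos : 0 < c6 := by positivity
  have hg0 : Tendsto (fun n => 4 * Real.exp (2*(L n) - c6*(L n)^6)) atTop (nhds 0) := by
    have h1 : Tendsto (fun y : ℝ => 2*y - c6*y^6) atTop atBot := by
      refine tendsto_atBot_mono' atTop ?_ tendsto_neg_atTop_atBot
      filter_upwards [eventually_ge_atTop (max 1 (3/c6))] with y hy
      have hy1 : (1:ℝ) ≤ y := le_trans (le_max_left _ _) hy
      have hy2 : 3/c6 ≤ y := le_trans (le_max_right _ _) hy
      have h3 : 3 ≤ c6 * y := by
        rw [div_le_iff₀ hc6pos] at hy2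
        linarith [hy2, mul_comm y c6]
      have e1 : 3*y^5 ≤ (c6*y)*y^5 := mul_le_mul_of_nonneg_right h3 (by positivity)
      have e2 : y ≤ y^5 := by
        calc y = y^1 := (pow_one y).symm
          _ ≤ y^5 := pow_le_pow_right₀ hy1 (by norm_num)
      nlinarith [e1, e2]
    have h2 : Tendsto (fun n => 2*(L n) - c6*(L n)^6) atTop atBot := h1.comp hLtop
    have h3 : Tendsto (fun n => Real.exp (2*(L n) - c6*(L n)^6)) atTop (nhds 0) :=
      Real.tendsto_exp_atBot.comp h2
    have h4 := h3.const_mul (4:ℝ)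
    simpa using h4
  refine squeeze_zero' (Filter.Eventually.of_forall (fun n => ENNReal.toReal_nonneg)) ?_ hg0
  have hLO' := (Asymptotics.isLittleO_iff.mp hLO) one_pos
  filter_upwards [eventually_ge_atTop 2, hN.eventually_ge_atTop 1,
    hLtop.eventually_ge_atTop 1, hLtop.eventually_ge_atTop ε, hLO'] with n hn2 hN1 hL1 hLε hF4
  haveI := hμd n
  set ηr : ℝ := ⨅ i : Fin (m n),
    GS.quad (GS.lap n (w n)) (x n i) * (1 - GS.quad (GS.lap n (w n)) (x n i)) with hηr_def
  have hq01 : ∀ i : Fin (m n), GS.quad (GS.lap n (w n)) (x n i) ∈ Set.Icc (0:ℝ) 1 := by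
    intro i
    rw [GS.quad_lap]
    constructor
    · exact Finset.sum_nonneg fun p _ => mul_nonneg (hw0 n p.1 p.2) (sq_nonneg _)
    · calc ∑ p ∈ GS.pairs n, w n p.1 p.2 * (x n i p.1 - x n i p.2)^2
          ≤ ∑ p ∈ GS.pairs n, w n p.1 p.2 := by
            refine Finset.sum_le_sum fun p _ => mul_le_of_le_one_right (hw0 n p.1 p.2) ?_
            rcases hx n i p.1 with h1 | h1 <;> rcases hx n i p.2 with h2 | h2 <;>
              (rw [h1, h2]; norm_num)
        _ = 1 := hw1 n hn2
  haveI : Nonempty (Fin (m n)) := ⟨⟨0, hm n⟩⟩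
  have hηr0 : 0 ≤ ηr := by
    rw [hηr_def]
    refine le_ciInf fun i => ?_
    obtain ⟨h1, h2⟩ := hq01 i
    nlinarith
  have hLn0 : (0:ℝ) < L n := lt_of_lt_of_le one_pos hL1
  have hL5 : (L n)^5 ≤ Real.sqrt (N n) * ηr := by
    simp only [Real.norm_eq_abs] at hF4
    rw [abs_of_nonneg (by positivity : (0:ℝ) ≤ (Real.log ((N n : ℝ) * (m n : ℝ)))^5),
      abs_of_nonneg (mul_nonneg (Real.sqrt_nonneg _) hηr0), one_mul] at hF4
    exact hF4
  have hm0 : (0:ℝ) < m n := by exact_mod_cast hm n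
  have hmR : (1:ℝ) ≤ m n := by exact_mod_cast hm n
  have hNR : (1:ℝ) ≤ N n := by exact_mod_cast hN1
  have hlogm : Real.log (m n) ≤ L n := by
    apply Real.log_le_log hm0
    nlinarith
  have hLεs : ε ≤ (L n)^2 := by nlinarith
  have hcore := GS.core n (N n) hN1 hn2 (w n) (hw0 n) (hw1 n hn2) (μd n)
    (e n) (hemeas n) (heind n) (hedist n hn2) (m n) (hm n) (x n) (hx n) (s n)
    (fun i j => hs n ⟨0, hN1⟩ i j) ε (L n) ηr hε hL1 hlogm hLεs hηr_def hL5
  have hmexp : ((m n):ℝ)^2 ≤ Real.exp (2 * L n) := by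
    have h1 : ((m n):ℝ) ≤ Real.exp (L n) := by
      rw [← Real.exp_log hm0]
      exact Real.exp_le_exp.2 hlogm
    calc ((m n):ℝ)^2 ≤ (Real.exp (L n))^2 := pow_le_pow_left₀ hm0.le h1 2
      _ = Real.exp (2 * L n) := by
          rw [show (2:ℝ) * L n = ((2:ℕ):ℝ) * L n by norm_num, Real.exp_nat_mul]
  have hNη : (L n)^10 ≤ (N n : ℝ) * ηr^2 := by
    have h1 : ((L n)^5)^2 ≤ (Real.sqrt (N n) * ηr)^2 :=
      pow_le_pow_left₀ (by positivity) hL5 2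
    calc (L n)^10 = ((L n)^5)^2 := by ring
      _ ≤ (Real.sqrt (N n) * ηr)^2 := h1
      _ = (N n : ℝ) * ηr^2 := by
          rw [mul_pow, Real.sq_sqrt (by positivity : (0:ℝ) ≤ ((N n : ℕ):ℝ))]
  have hexp2 : c6 * (L n)^6 ≤ ((N n:ℝ) * (ε * ηr / (100 * (L n)^2))^2)/2 := by
    rw [hc6_def, le_div_iff₀ (by norm_num : (0:ℝ) < 2), div_pow, ← mul_div_assoc,
      le_div_iff₀ (by positivity : (0:ℝ) < (100*(L n)^2)^2)]
    have key : ε^2 * (L n)^10 ≤ ε^2 * ((N n:ℝ) * ηr^2) :=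
      mul_le_mul_of_nonneg_left hNη (sq_nonneg ε)
    nlinarith [key]
  refine le_trans hcore ?_
  have hstep1 : 4 * ((m n):ℝ)^2 * Real.exp (-((N n:ℝ) * (ε * ηr / (100 * (L n)^2))^2)/2)
      ≤ (4 * Real.exp (2 * L n)) * Real.exp (-(c6*(L n)^6)) := by
    have ha : 4 * ((m n):ℝ)^2 ≤ 4 * Real.exp (2 * L n) := by linarith [hmexp]
    have hb : Real.exp (-((N n:ℝ) * (ε * ηr / (100 * (L n)^2))^2)/2)
        ≤ Real.exp (-(c6*(L n)^6)) := by
      rw [Real.exp_le_exp]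
      linarith [hexp2]
    exact mul_le_mul ha hb (Real.exp_pos _).le (by positivity)
  have hstep2 : (4 * Real.exp (2 * L n)) * Real.exp (-(c6*(L n)^6))
      = 4 * Real.exp (2*(L n) - c6*(L n)^6) := by
    rw [mul_assoc, ← Real.exp_add]
    congr 1
  exact le_of_le_of_eq hstep1 hstep2
end
end

section
/- For a sequence of weighted graphs with edge weights summing to 1, if $n/N_n \to 0$ and $\|\mathsf{d}_n\|_\infty^2/\|\mathsf{d}_n\|_2^2 \to 0$ as $n\to\infty$, where $\mathsf{d}_n$ is the vector of diagonal entries of the Laplacian $L_n$, then: the maximum absolute entry of $L_n$ equals $\|\mathsf{d}_n\|_\infty$ and tends to $0$; $\mathrm{tr}(L_n^2) \to 0$; and $N_n\,\mathrm{tr}(L_n^2) \to \infty$. -/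
open MeasureTheory ProbabilityTheory Filter Finset

noncomputable section

namespace GSAux
open GS

def ind (n : ℕ) (p : Fin n × Fin n) (k : Fin n) : ℝ :=
  (if k = p.1 then (1 : ℝ) else 0) + (if k = p.2 then 1 else 0)

lemma mem_pairs {n : ℕ} {p : Fin n × Fin n} (hp : p ∈ pairs n) : p.1 ≠ p.2 := by
  have := (Finset.mem_filter.mp hp).2
  exact ne_of_lt this

lemma abs_edgeVec {n : ℕ} {p : Fin n × Fin n} (hp : p.1 ≠ p.2) (k : Fin n) :
    |edgeVec n p k| = ind n p k := by
  unfold edgeVec ind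
  by_cases h1 : k = p.1 <;> by_cases h2 : k = p.2
  · exact absurd (h1 ▸ h2) hp
  all_goals simp [h1, h2, hp, Ne.symm hp]

lemma edgeVec_sq {n : ℕ} {p : Fin n × Fin n} (hp : p.1 ≠ p.2) (k : Fin n) :
    edgeVec n p k * edgeVec n p k = ind n p k := by
  unfold edgeVec ind
  by_cases h1 : k = p.1 <;> by_cases h2 : k = p.2
  · exact absurd (h1 ▸ h2) hp
  all_goals simp [h1, h2, hp, Ne.symm hp]

lemma abs_edgeVec_le {n : ℕ} (p : Fin n × Fin n) (k : Fin n) :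
    |edgeVec n p k| ≤ 1 := by
  unfold edgeVec
  split_ifs <;> norm_num

lemma sum_ind {n : ℕ} {p : Fin n × Fin n} (hp : p.1 ≠ p.2) :
    ∑ k, ind n p k = 2 := by
  unfold ind
  rw [Finset.sum_add_distrib]
  simp
  norm_num

lemma ind_nonneg {n : ℕ} (p : Fin n × Fin n) (k : Fin n) : 0 ≤ ind n p k := by
  unfold ind; positivity

lemma lap_apply (n : ℕ) (w : Fin n → Fin n → ℝ) (i j : Fin n) :
    lap n w i j = ∑ p ∈ pairs n, w p.1 p.2 * (edgeVec n p i * edgeVec n p j) := by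
  unfold lap edgeMat
  rw [Matrix.sum_apply]
  exact Finset.sum_congr rfl fun p _ => by
    simp [Matrix.vecMulVec_apply, mul_comm]

lemma deg_eq (n : ℕ) (w : Fin n → Fin n → ℝ) (i : Fin n) :
    degVec n w i = ∑ p ∈ pairs n, w p.1 p.2 * ind n p i := by
  unfold degVec
  rw [lap_apply]
  exact Finset.sum_congr rfl fun p hp => by rw [edgeVec_sq (mem_pairs hp)]

lemma deg_nonneg {n : ℕ} {w : Fin n → Fin n → ℝ} (hw0 : ∀ i j, 0 ≤ w i j) (i : Fin n) :
    0 ≤ degVec n w i := by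
  rw [deg_eq]
  exact Finset.sum_nonneg fun p _ => mul_nonneg (hw0 _ _) (ind_nonneg _ _)

lemma lap_symm (n : ℕ) (w : Fin n → Fin n → ℝ) (i j : Fin n) :
    lap n w i j = lap n w j i := by
  rw [lap_apply, lap_apply]
  exact Finset.sum_congr rfl fun p _ => by ring

lemma abs_lap_le {n : ℕ} {w : Fin n → Fin n → ℝ} (hw0 : ∀ i j, 0 ≤ w i j) (i j : Fin n) :
    |lap n w i j| ≤ degVec n w i := by
  rw [lap_apply, deg_eq]
  calc |∑ p ∈ pairs n, w p.1 p.2 * (edgeVec n p i * edgeVec n p j)|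
      ≤ ∑ p ∈ pairs n, |w p.1 p.2 * (edgeVec n p i * edgeVec n p j)| :=
        Finset.abs_sum_le_sum_abs _ _
    _ ≤ ∑ p ∈ pairs n, w p.1 p.2 * ind n p i := by
        refine Finset.sum_le_sum fun p hp => ?_
        rw [abs_mul, abs_mul, abs_of_nonneg (hw0 _ _), ← abs_edgeVec (mem_pairs hp) i]
        have h1 := abs_edgeVec_le p j
        have h2 := abs_nonneg (edgeVec n p i)
        nlinarith [mul_le_mul_of_nonneg_left h1 (mul_nonneg (hw0 p.1 p.2) h2)]

lemma row_sum_le {n : ℕ} {w : Fin n → Fin n → ℝ} (hw0 : ∀ i j, 0 ≤ w i j) (i : Fin n) :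
    ∑ j, |lap n w i j| ≤ 2 * degVec n w i := by
  have : ∑ j, |lap n w i j| ≤ ∑ j, ∑ p ∈ pairs n, w p.1 p.2 * (|edgeVec n p i| * |edgeVec n p j|) := by
    refine Finset.sum_le_sum fun j _ => ?_
    rw [lap_apply]
    refine (Finset.abs_sum_le_sum_abs _ _).trans (le_of_eq ?_)
    exact Finset.sum_congr rfl fun p _ => by
      rw [abs_mul, abs_mul, abs_of_nonneg (hw0 _ _)]
  refine this.trans ?_
  rw [Finset.sum_comm, deg_eq, Finset.mul_sum]
  refine Finset.sum_le_sum fun p hp => ?_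
  have : ∑ j, w p.1 p.2 * (|edgeVec n p i| * |edgeVec n p j|)
      = w p.1 p.2 * |edgeVec n p i| * ∑ j, |edgeVec n p j| := by
    rw [Finset.mul_sum]; exact Finset.sum_congr rfl fun j _ => by ring
  rw [this]
  have hs : ∑ j, |edgeVec n p j| = 2 := by
    rw [Finset.sum_congr rfl fun j _ => abs_edgeVec (mem_pairs hp) j, sum_ind (mem_pairs hp)]
  rw [hs, abs_edgeVec (mem_pairs hp) i]
  ring_nf
  nlinarith [hw0 p.1 p.2, ind_nonneg p i]

lemma sum_deg {n : ℕ} (w : Fin n → Fin n → ℝ) :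
    ∑ i, degVec n w i = 2 * ∑ p ∈ pairs n, w p.1 p.2 := by
  rw [Finset.sum_congr rfl fun i _ => deg_eq n w i, Finset.sum_comm, Finset.mul_sum]
  refine Finset.sum_congr rfl fun p hp => ?_
  rw [← Finset.mul_sum, sum_ind (mem_pairs hp)]
  ring

lemma trace_sq (n : ℕ) (w : Fin n → Fin n → ℝ) :
    (lap n w * lap n w).trace = ∑ i, ∑ j, (lap n w i j) ^ 2 := by
  rw [Matrix.trace]
  refine Finset.sum_congr rfl fun i _ => ?_
  rw [Matrix.diag_apply, Matrix.mul_apply]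
  exact Finset.sum_congr rfl fun j _ => by rw [← lap_symm n w i j]; ring

lemma abs_le_supNorm {n : ℕ} (v : Fin n → ℝ) (i : Fin n) : |v i| ≤ supNorm v := by
  unfold supNorm
  exact le_ciSup (Set.Finite.bddAbove (Set.finite_range fun i => |v i|)) i

lemma supNorm_nonneg {n : ℕ} (v : Fin n → ℝ) : 0 ≤ supNorm v :=
  Real.iSup_nonneg fun i => abs_nonneg _

lemma matSupNorm_eq {n : ℕ} {w : Fin n → Fin n → ℝ} (hw0 : ∀ i j, 0 ≤ w i j) :
    matSupNorm (lap n w) = supNorm (degVec n w) := by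
  unfold matSupNorm supNorm
  refine iSup_congr fun i => ?_
  have _inst : Nonempty (Fin n) := ⟨i⟩
  refine le_antisymm (ciSup_le fun j => ?_) ?_
  · rw [abs_of_nonneg (deg_nonneg hw0 i)]
    exact abs_lap_le hw0 i j
  · have := le_ciSup (Set.Finite.bddAbove (Set.finite_range fun j => |lap n w i j|)) i
    exact this

end GSAux

namespace GSAux
open GS

lemma l2_sq {n : ℕ} (v : Fin n → ℝ) : l2Norm v ^ 2 = ∑ i, v i ^ 2 := by
  unfold l2Norm
  exact Real.sq_sqrt (Finset.sum_nonneg fun i _ => sq_nonneg _)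

lemma trace_nonneg (n : ℕ) (w : Fin n → Fin n → ℝ) : 0 ≤ (lap n w * lap n w).trace := by
  rw [trace_sq]
  exact Finset.sum_nonneg fun i _ => Finset.sum_nonneg fun j _ => sq_nonneg _

lemma trace_le {n : ℕ} {w : Fin n → Fin n → ℝ} (hw0 : ∀ i j, 0 ≤ w i j)
    (h1 : ∑ p ∈ pairs n, w p.1 p.2 = 1) :
    (lap n w * lap n w).trace ≤ 4 * supNorm (degVec n w) := by
  set s := supNorm (degVec n w) with hs
  have hs0 : 0 ≤ s := supNorm_nonneg _
  rw [trace_sq]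
  have step1 : ∀ i : Fin n, ∑ j, (lap n w i j) ^ 2 ≤ s * (2 * degVec n w i) := by
    intro i
    have h2 : ∑ j, (lap n w i j) ^ 2 ≤ ∑ j, s * |lap n w i j| := by
      refine Finset.sum_le_sum fun j _ => ?_
      have hL : |lap n w i j| ≤ s := by
        refine (abs_lap_le hw0 i j).trans ?_
        exact (le_abs_self _).trans (abs_le_supNorm _ i)
      nlinarith [abs_nonneg (lap n w i j), sq_abs (lap n w i j)]
    refine h2.trans ?_
    rw [← Finset.mul_sum]
    exact mul_le_mul_of_nonneg_left (row_sum_le hw0 i) hs0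
  calc ∑ i, ∑ j, (lap n w i j) ^ 2 ≤ ∑ i, s * (2 * degVec n w i) :=
        Finset.sum_le_sum fun i _ => step1 i
    _ = 2 * s * ∑ i, degVec n w i := by
        rw [Finset.mul_sum]; exact Finset.sum_congr rfl fun i _ => by ring
    _ = 4 * s := by rw [sum_deg, h1]; ring

lemma sum_sq_deg_le {n : ℕ} {w : Fin n → Fin n → ℝ} (hw0 : ∀ i j, 0 ≤ w i j)
    (h1 : ∑ p ∈ pairs n, w p.1 p.2 = 1) :
    ∑ i, (degVec n w i) ^ 2 ≤ 2 * supNorm (degVec n w) := by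
  have : ∑ i, (degVec n w i) ^ 2 ≤ ∑ i, supNorm (degVec n w) * degVec n w i := by
    refine Finset.sum_le_sum fun i _ => ?_
    have hd : degVec n w i ≤ supNorm (degVec n w) :=
      (le_abs_self _).trans (abs_le_supNorm _ i)
    nlinarith [deg_nonneg hw0 i]
  refine this.trans ?_
  rw [← Finset.mul_sum, sum_deg, h1]
  ring_nf
  exact le_refl _

lemma four_le {n : ℕ} {w : Fin n → Fin n → ℝ}
    (h1 : ∑ p ∈ pairs n, w p.1 p.2 = 1) :
    (4 : ℝ) ≤ n * ∑ i, (degVec n w i) ^ 2 := by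
  have hcs := sq_sum_le_card_mul_sum_sq (s := Finset.univ) (f := degVec n w)
  rw [sum_deg, h1] at hcs
  simp only [Finset.card_univ, Fintype.card_fin] at hcs
  nlinarith [hcs]

lemma trace_ge {n : ℕ} {w : Fin n → Fin n → ℝ} :
    ∑ i, (degVec n w i) ^ 2 ≤ (lap n w * lap n w).trace := by
  rw [trace_sq]
  refine Finset.sum_le_sum fun i _ => ?_
  exact Finset.single_le_sum (fun j _ => sq_nonneg (lap n w i j)) (Finset.mem_univ i)

lemma sup_le_ratio {n : ℕ} {w : Fin n → Fin n → ℝ} (hw0 : ∀ i j, 0 ≤ w i j)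
    (h1 : ∑ p ∈ pairs n, w p.1 p.2 = 1) (hn : 2 ≤ n) :
    supNorm (degVec n w) ≤ 2 * (supNorm (degVec n w) ^ 2 / l2Norm (degVec n w) ^ 2) := by
  set s := supNorm (degVec n w) with hs
  set D := ∑ i, (degVec n w i) ^ 2 with hD
  have hs0 : 0 ≤ s := supNorm_nonneg _
  have hnR : (2 : ℝ) ≤ n := by exact_mod_cast hn
  have h4 := four_le h1
  have hle : D ≤ 2 * s := sum_sq_deg_le hw0 h1
  have hDpos : 0 < D := by nlinarith
  have hspos : 0 < s := by nlinarith
  rw [l2_sq, ← hD, mul_div_assoc', le_div_iff₀ hDpos]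
  nlinarith

end GSAux


/-- Lemma F.1. For a sequence of weighted graphs with edge weights summing
to 1, if `n/Nₙ → 0` and `‖dₙ‖_∞² / ‖dₙ‖_2² → 0`, where `dₙ` is the vector of diagonal entries
of the Laplacian `Lₙ`, then the maximum absolute entry of `Lₙ` equals `‖dₙ‖_∞` and tends to
`0`, `tr(Lₙ²) → 0`, and `Nₙ · tr(Lₙ²) → ∞`. -/
theorem stmt5
    (N : ℕ → ℕ) (w : ∀ n, Fin n → Fin n → ℝ)
    (hw0 : ∀ n i j, 0 ≤ w n i j)
    (hw1 : ∀ n, 2 ≤ n → ∑ p ∈ GS.pairs n, w n p.1 p.2 = 1)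
    (hnN : ∀ ε : ℝ, 0 < ε → ∀ᶠ n : ℕ in atTop, (n : ℝ) ≤ ε * (N n : ℝ))
    (hdeg : Tendsto
      (fun n => (GS.supNorm (GS.degVec n (w n))) ^ 2 / (GS.l2Norm (GS.degVec n (w n))) ^ 2)
      atTop (nhds 0)) :
    (∀ n, GS.matSupNorm (GS.lap n (w n)) = GS.supNorm (GS.degVec n (w n)))
    ∧ Tendsto (fun n => GS.supNorm (GS.degVec n (w n))) atTop (nhds 0)
    ∧ Tendsto (fun n => (GS.lap n (w n) * GS.lap n (w n)).trace) atTop (nhds 0)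
    ∧ Tendsto (fun n : ℕ => (N n : ℝ) * (GS.lap n (w n) * GS.lap n (w n)).trace) atTop atTop := by

  have hsup : Tendsto (fun n => GS.supNorm (GS.degVec n (w n))) atTop (nhds 0) := by
    refine squeeze_zero'
      (g := fun n => 2 * (GS.supNorm (GS.degVec n (w n)) ^ 2 / GS.l2Norm (GS.degVec n (w n)) ^ 2))
      (Filter.Eventually.of_forall fun n => GSAux.supNorm_nonneg _) ?_ ?_
    · filter_upwards [eventually_ge_atTop 2] with n hn
      exact GSAux.sup_le_ratio (hw0 n) (hw1 n hn) hn
    · simpa using hdeg.const_mul 2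
  refine ⟨fun n => GSAux.matSupNorm_eq (hw0 n), hsup, ?_, ?_⟩
  · refine squeeze_zero' (g := fun n => 4 * GS.supNorm (GS.degVec n (w n)))
      (Filter.Eventually.of_forall fun n => GSAux.trace_nonneg n (w n)) ?_ ?_
    · filter_upwards [eventually_ge_atTop 2] with n hn
      exact GSAux.trace_le (hw0 n) (hw1 n hn)
    · simpa using hsup.const_mul 4
  · rw [tendsto_atTop]
    intro M
    set K := max M 1 with hK
    have hKpos : (0 : ℝ) < K := lt_of_lt_of_le one_pos (le_max_right _ _)
    filter_upwards [hnN (1 / K) (by positivity), eventually_ge_atTop 2] with n hn1 hn2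
    have hnR : (2 : ℝ) ≤ n := by exact_mod_cast hn2
    have hnpos : (0 : ℝ) < n := by linarith
    have htr : (4 : ℝ) / n ≤ (GS.lap n (w n) * GS.lap n (w n)).trace := by
      have h4 := GSAux.four_le (hw1 n hn2)
      have := GSAux.trace_ge (n := n) (w := w n)
      rw [div_le_iff₀ hnpos]
      nlinarith
    have hKn : K * n ≤ (N n : ℝ) := by
      have e : K * (1 / K * (N n : ℝ)) = N n := by field_simp
      nlinarith [mul_le_mul_of_nonneg_left hn1 hKpos.le]
    have hNpos : (0 : ℝ) < N n := by nlinarith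
    have step1 : (N n : ℝ) * (4 / n) ≤ (N n : ℝ) * (GS.lap n (w n) * GS.lap n (w n)).trace :=
      mul_le_mul_of_nonneg_left htr hNpos.le
    have step2 : 4 * K ≤ (N n : ℝ) * (4 / n) := by
      have e : (N n : ℝ) * (4 / n) = 4 * (N n : ℝ) / n := by ring
      rw [e, le_div_iff₀ hnpos]
      nlinarith
    have hMK : M ≤ K := le_max_left _ _
    linarith
end
end

section
/- Under edge-weight sampling, if $N_n\to\infty$, $n/N_n\to 0$, and $\|\mathsf{d}_n\|_\infty/\|\mathsf{d}_n\|_2\to 0$ as $n\to\infty$, then $\|\hat{\mathsf{d}}_n\|_\infty/\|\hat{\mathsf{d}}_n\|_2 \to 0$ in probability, where $\hat{\mathsf{d}}_n\in\mathbb{R}^n$ is the vector of diagonal entries of the sparsified Laplacian $\hat L_n$. -/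
open MeasureTheory ProbabilityTheory Filter Finset

noncomputable section

namespace GS

lemma edgeMat_diag' (n : ℕ) (p : Fin n × Fin n) (i : Fin n) :
    edgeMat n p i i = (edgeVec n p i)^2 := by
  simp [edgeMat, Matrix.vecMulVec_apply, sq]

lemma edgeMat_diag_cases (n : ℕ) (p : Fin n × Fin n) (i : Fin n) :
    edgeMat n p i i = 0 ∨ edgeMat n p i i = 1 := by
  rw [edgeMat_diag']; unfold edgeVec; split_ifs <;> norm_num

lemma edgeMat_diag_nonneg (n : ℕ) (p : Fin n × Fin n) (i : Fin n) :
    0 ≤ edgeMat n p i i := by rcases edgeMat_diag_cases n p i with h | h <;> simp [h]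

lemma edgeMat_diag_le_one (n : ℕ) (p : Fin n × Fin n) (i : Fin n) :
    edgeMat n p i i ≤ 1 := by rcases edgeMat_diag_cases n p i with h | h <;> simp [h]

lemma edgeMat_diag_sq (n : ℕ) (p : Fin n × Fin n) (i : Fin n) :
    (edgeMat n p i i)^2 = edgeMat n p i i := by
  rcases edgeMat_diag_cases n p i with h | h <;> simp [h]

lemma sum_edgeMat_diag (n : ℕ) (p : Fin n × Fin n) (h : p.1 ≠ p.2) :
    ∑ i, edgeMat n p i i = 2 := by
  have hterm : ∀ i, edgeMat n p i i
      = (if i = p.1 then (1:ℝ) else 0) + (if i = p.2 then (1:ℝ) else 0) := by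
    intro i
    rw [edgeMat_diag']; unfold edgeVec
    rcases eq_or_ne i p.1 with h1 | h1 <;> rcases eq_or_ne i p.2 with h2 | h2 <;>
      simp_all <;> norm_num
  rw [Finset.sum_congr rfl fun i _ => hterm i, Finset.sum_add_distrib]
  simp
  norm_num

lemma degVec_eq (n : ℕ) (w : Fin n → Fin n → ℝ) (i : Fin n) :
    degVec n w i = ∑ p ∈ pairs n, w p.1 p.2 * edgeMat n p i i := by
  simp [degVec, lap, Matrix.sum_apply, Matrix.smul_apply, smul_eq_mul]

lemma l2Norm_eq' {n : ℕ} (v : Fin n → ℝ) :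
    l2Norm v = ‖(WithLp.equiv 2 (Fin n → ℝ)).symm v‖ := by
  rw [EuclideanSpace.norm_eq]
  simp [l2Norm, sq_abs]

lemma l2Norm_sub_lower {n : ℕ} (u v : Fin n → ℝ) :
    l2Norm u - l2Norm v ≤ l2Norm (u - v) := by
  rw [l2Norm_eq' u, l2Norm_eq' v, l2Norm_eq' (u - v)]
  simpa using norm_sub_norm_le ((WithLp.equiv 2 (Fin n → ℝ)).symm u)
    ((WithLp.equiv 2 (Fin n → ℝ)).symm v)

lemma le_supNorm {n : ℕ} (v : Fin n → ℝ) (i : Fin n) : |v i| ≤ supNorm v :=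
  le_ciSup (f := fun j => |v j|) (Set.Finite.bddAbove (Set.finite_range _)) i

lemma ratio_small {n : ℕ} (hn : 0 < n) (d v : Fin n → ℝ) (c ε S : ℝ)
    (hbpos : 0 < l2Norm d) (hc0 : 0 < c) (hc2 : c ≤ 1/2) (hc8 : 8*c ≤ ε) (hε : 0 < ε)
    (ha : supNorm d < c * l2Norm d) (hS : S = ∑ i, (v i - d i)^2)
    (hcon : S < c^2 * (l2Norm d)^2) :
    |supNorm v / l2Norm v| < ε := by
  haveI : Nonempty (Fin n) := ⟨⟨0, hn⟩⟩
  set b := l2Norm d with hb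
  set t := Real.sqrt S with ht
  have hS0' : 0 ≤ S := by
    rw [hS]; exact Finset.sum_nonneg fun i _ => sq_nonneg _
  have ht0 : 0 ≤ t := Real.sqrt_nonneg _
  have htlt : t < c * b := by
    have h1 : S < (c*b)^2 := by nlinarith [hcon]
    have h2 := Real.sqrt_lt_sqrt hS0' h1
    rwa [Real.sqrt_sq (by positivity : (0:ℝ) ≤ c*b)] at h2
  have hdiff : l2Norm (d - v) = t := by
    rw [ht, hS, l2Norm]
    congr 1
    refine Finset.sum_congr rfl fun i _ => ?_
    rw [Pi.sub_apply]
    ring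
  have hl2low : b - t ≤ l2Norm v := by
    have h := l2Norm_sub_lower d v
    rw [hdiff] at h
    linarith
  have hl2pos : 0 < l2Norm v := by
    nlinarith [mul_nonneg (by linarith [hc2] : (0:ℝ) ≤ 1/2 - c) hbpos.le]
  have hsupv : supNorm v ≤ supNorm d + t := by
    refine ciSup_le fun i => ?_
    have h1 : |v i - d i| ≤ t := by
      rw [ht, hS, ← Real.sqrt_sq_eq_abs]
      exact Real.sqrt_le_sqrt
        (Finset.single_le_sum (f := fun j => (v j - d j)^2)
          (fun j _ => sq_nonneg _) (Finset.mem_univ i))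
    calc |v i| = |d i + (v i - d i)| := by ring_nf
      _ ≤ |d i| + |v i - d i| := abs_add_le _ _
      _ ≤ supNorm d + t := add_le_add (le_supNorm d i) h1
  have hcb0 : 0 < c * b := by positivity
  have hsup2 : supNorm v < 2 * (c * b) := by
    calc supNorm v ≤ supNorm d + t := hsupv
      _ < c*b + c*b := add_lt_add ha htlt
      _ = 2*(c*b) := by ring
  have hv0 : 0 ≤ supNorm v :=
    le_trans (abs_nonneg _) (le_supNorm v ⟨0, hn⟩)
  have hl2half : b/2 ≤ l2Norm v := by
    nlinarith [mul_nonneg (by linarith [hc2] : (0:ℝ) ≤ 1/2 - c) hbpos.le]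
  have h8 : 4 * (c * b) ≤ ε * l2Norm v := by
    have h := mul_le_mul hc8 hl2half (by positivity) (le_of_lt hε)
    calc 4 * (c*b) = 8 * c * (b/2) := by ring
      _ ≤ ε * l2Norm v := h
  have hfinal : supNorm v / l2Norm v < ε := by
    rw [div_lt_iff₀ hl2pos]
    calc supNorm v < 2 * (c*b) := hsup2
      _ ≤ 4 * (c*b) := by nlinarith [hcb0]
      _ ≤ ε * l2Norm v := h8
  rwa [abs_of_nonneg (div_nonneg hv0 hl2pos.le)]

lemma integrable_comp {n : ℕ} {Ω : Type*} [MeasurableSpace Ω] (μ : Measure Ω)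
    [IsProbabilityMeasure μ] {X : Ω → Fin n × Fin n} (hX : Measurable X)
    (φ : Fin n × Fin n → ℝ) : Integrable (fun ω => φ (X ω)) μ := by
  refine ⟨((measurable_of_countable φ).comp hX).aestronglyMeasurable, ?_⟩
  apply HasFiniteIntegral.of_bounded (C := ∑ p : Fin n × Fin n, |φ p|)
  filter_upwards with ω
  rw [Real.norm_eq_abs]
  exact Finset.single_le_sum (fun p _ => abs_nonneg (φ p)) (Finset.mem_univ (X ω))

lemma integral_comp {n : ℕ} {Ω : Type*} [MeasurableSpace Ω] (μ : Measure Ω)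
    [IsProbabilityMeasure μ] {X : Ω → Fin n × Fin n} (hX : Measurable X)
    {w : Fin n → Fin n → ℝ} (hw0 : ∀ i j, 0 ≤ w i j)
    (hdist : ∀ p : Fin n × Fin n,
      μ {ω | X ω = p} = if p.1 < p.2 then ENNReal.ofReal (w p.1 p.2) else 0)
    (φ : Fin n × Fin n → ℝ) :
    ∫ ω, φ (X ω) ∂μ = ∑ p ∈ pairs n, φ p * w p.1 p.2 := by
  have hmap : Integrable φ (Measure.map X μ) :=
    (integrable_map_measure (measurable_of_countable φ).aestronglyMeasurable
      hX.aemeasurable).mpr (integrable_comp μ hX φ)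
  rw [← integral_map hX.aemeasurable (measurable_of_countable φ).aestronglyMeasurable,
    integral_fintype hmap]
  rw [pairs, Finset.sum_filter]
  refine Finset.sum_congr rfl fun p _ => ?_
  rw [Measure.real, Measure.map_apply hX (measurableSet_singleton p)]
  have hpre : X ⁻¹' {p} = {ω | X ω = p} := by ext ω; simp
  rw [hpre, hdist p]
  split_ifs with h
  · rw [ENNReal.toReal_ofReal (hw0 p.1 p.2), smul_eq_mul, mul_comm]
  · simp

end GS


/-- Lemma F.7. Under edge-weight sampling, if `Nₙ → ∞`, `n/Nₙ → 0`, and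
`‖dₙ‖_∞/‖dₙ‖_2 → 0`, then `‖d̂ₙ‖_∞/‖d̂ₙ‖_2 → 0` in probability, where `d̂ₙ` is the vector of
diagonal entries of the sparsified Laplacian `L̂ₙ`. -/
theorem stmt12
    (N : ℕ → ℕ) (w : ∀ n, Fin n → Fin n → ℝ)
    (hw0 : ∀ n i j, 0 ≤ w n i j)
    (hw1 : ∀ n, 2 ≤ n → ∑ p ∈ GS.pairs n, w n p.1 p.2 = 1)
    (Ωd : ℕ → Type) [∀ n, MeasurableSpace (Ωd n)]
    (μd : ∀ n, Measure (Ωd n)) (hμd : ∀ n, IsProbabilityMeasure (μd n))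
    (e : ∀ n, Fin (N n) → Ωd n → Fin n × Fin n)
    (hemeas : ∀ n k, Measurable (e n k))
    (heind : ∀ n, iIndepFun (e n) (μd n))
    (hedist : ∀ n, 2 ≤ n → ∀ k p, μd n {ω | e n k ω = p} =
      if p.1 < p.2 then ENNReal.ofReal (w n p.1 p.2) else 0)
    (hN : Tendsto N atTop atTop)
    (hnN : ∀ ε : ℝ, 0 < ε → ∀ᶠ n : ℕ in atTop, (n : ℝ) ≤ ε * (N n : ℝ))
    (hdeg : Tendsto
      (fun n => GS.supNorm (GS.degVec n (w n)) / GS.l2Norm (GS.degVec n (w n)))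
      atTop (nhds 0))
    :
    GS.TendstoP0 Ωd μd (fun n ω =>
      GS.supNorm (fun i => GS.sparseLap n (N n) (fun k => e n k ω) i i)
        / GS.l2Norm (fun i => GS.sparseLap n (N n) (fun k => e n k ω) i i)) := by
  intro ε hε
  set c : ℝ := min (1/2) (ε/8) with hcdef
  have hc0 : 0 < c := lt_min (by norm_num) (by positivity)
  have hc8 : 8 * c ≤ ε := by
    have h := min_le_right (1/2:ℝ) (ε/8)
    rw [← hcdef] at h; linarith
  have hc2 : c ≤ 1/2 := min_le_left _ _
  have hgtend : Tendsto (fun m : ℕ => (m:ℝ)/(c^2 * N m)) atTop (nhds 0) := by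
    rw [NormedAddCommGroup.tendsto_nhds_zero]
    intro δ hδ
    filter_upwards [hnN (c^2*δ/2) (by positivity), hN.eventually_ge_atTop 1] with n h1 h2
    have hNpos : (0:ℝ) < N n := by exact_mod_cast Nat.lt_of_lt_of_le Nat.zero_lt_one h2
    have hnn : 0 ≤ (n:ℝ)/(c^2 * N n) := by positivity
    rw [Real.norm_eq_abs, abs_of_nonneg hnn, div_lt_iff₀ (by positivity)]
    have hp : 0 < δ * (c^2 * (N n:ℝ)) := by positivity
    have hre : δ * (c^2 * (N n:ℝ)) = 2 * (c^2*δ/2*(N n:ℝ)) := by ring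
    have hn0 : (0:ℝ) ≤ n := Nat.cast_nonneg n
    linarith
  refine tendsto_of_tendsto_of_tendsto_of_le_of_le' tendsto_const_nhds hgtend
    (Eventually.of_forall fun n => ENNReal.toReal_nonneg) ?_
  filter_upwards [eventually_ge_atTop 2, hN.eventually_ge_atTop 1,
    hdeg.eventually_lt_const hc0] with n hn2 hN1 hratio
  haveI := hμd n
  have hNpos : (0:ℝ) < N n := by exact_mod_cast Nat.lt_of_lt_of_le Nat.zero_lt_one hN1
  have hnpos : 0 < n := lt_of_lt_of_le (by norm_num) hn2
  haveI : Nonempty (Fin n) := ⟨⟨0, hnpos⟩⟩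
  set d : Fin n → ℝ := GS.degVec n (w n) with hd_def
  set b : ℝ := GS.l2Norm d with hb_def
  have hgw_eq : ∀ i, d i = ∑ p ∈ GS.pairs n, GS.edgeMat n p i i * w n p.1 p.2 := by
    intro i
    rw [hd_def, GS.degVec_eq]
    exact Finset.sum_congr rfl fun p _ => mul_comm _ _
  have hd0 : ∀ i, 0 ≤ d i := fun i => by
    rw [hgw_eq i]
    exact Finset.sum_nonneg fun p _ =>
      mul_nonneg (GS.edgeMat_diag_nonneg n p i) (hw0 n p.1 p.2)
  have hd1 : ∀ i, d i ≤ 1 := fun i => by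
    rw [hgw_eq i]
    calc ∑ p ∈ GS.pairs n, GS.edgeMat n p i i * w n p.1 p.2
        ≤ ∑ p ∈ GS.pairs n, 1 * w n p.1 p.2 :=
          Finset.sum_le_sum fun p _ =>
            mul_le_mul_of_nonneg_right (GS.edgeMat_diag_le_one n p i) (hw0 n p.1 p.2)
      _ = 1 := by simp only [one_mul]; exact hw1 n hn2
  have hdsum : ∑ i, d i = 2 := by
    have h1 : ∑ i, d i = ∑ p ∈ GS.pairs n, (∑ i, GS.edgeMat n p i i) * w n p.1 p.2 := by
      rw [Finset.sum_congr rfl fun i _ => hgw_eq i, Finset.sum_comm]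
      exact Finset.sum_congr rfl fun p _ => by rw [Finset.sum_mul]
    rw [h1]
    have h2 : ∀ p ∈ GS.pairs n, (∑ i, GS.edgeMat n p i i) * w n p.1 p.2
        = 2 * w n p.1 p.2 := by
      intro p hp
      rw [GS.sum_edgeMat_diag n p (ne_of_lt (Finset.mem_filter.mp hp).2)]
    rw [Finset.sum_congr rfl h2, ← Finset.mul_sum, hw1 n hn2, mul_one]
  have hb2eq : b^2 = ∑ i, d i ^ 2 := by
    rw [hb_def, GS.l2Norm]
    exact Real.sq_sqrt (Finset.sum_nonneg fun i _ => sq_nonneg _)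
  have hb2 : 4 ≤ (n:ℝ) * b^2 := by
    have h := sq_sum_le_card_mul_sum_sq (s := Finset.univ) (f := d)
    rw [hdsum] at h
    rw [hb2eq]
    norm_num at h
    simpa using h
  have hbpos : 0 < b := by
    have hb0 : 0 ≤ b := Real.sqrt_nonneg _
    rcases hb0.lt_or_eq with h | h
    · exact h
    · exfalso; rw [← h] at hb2; norm_num at hb2
  have ha : GS.supNorm d < c * b := by
    rw [div_lt_iff₀ hbpos] at hratio
    linarith
  set S : Ωd n → ℝ :=
    fun ω => ∑ i, ((GS.sparseLap n (N n) (fun k => e n k ω) i i) - d i)^2 with hS_def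
  have hdh_eq : ∀ (ω : Ωd n) (i : Fin n), GS.sparseLap n (N n) (fun k => e n k ω) i i
      = (N n:ℝ)⁻¹ * ∑ k, GS.edgeMat n (e n k ω) i i := by
    intro ω i
    simp [GS.sparseLap, Matrix.smul_apply, Matrix.sum_apply, smul_eq_mul]
  have hint : ∀ (k : Fin (N n)) (φ : Fin n × Fin n → ℝ),
      Integrable (fun ω => φ (e n k ω)) (μd n) :=
    fun k φ => GS.integrable_comp (μd n) (hemeas n k) φ
  have hEint : ∀ (k : Fin (N n)) (φ : Fin n × Fin n → ℝ),
      ∫ ω, φ (e n k ω) ∂(μd n) = ∑ p ∈ GS.pairs n, φ p * w n p.1 p.2 :=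
    fun k φ => GS.integral_comp (μd n) (hemeas n k) (hw0 n) (fun p => hedist n hn2 k p) φ
  have hEY : ∀ (k : Fin (N n)) (i : Fin n),
      ∫ ω, (GS.edgeMat n (e n k ω) i i - d i) ∂(μd n) = 0 := by
    intro k i
    have h0 : ∫ ω, (GS.edgeMat n (e n k ω) i i - d i) ∂(μd n)
        = ∑ p ∈ GS.pairs n, (GS.edgeMat n p i i - d i) * w n p.1 p.2 :=
      hEint k (fun p => GS.edgeMat n p i i - d i)
    rw [h0]
    have h1 : ∀ p ∈ GS.pairs n, (GS.edgeMat n p i i - d i) * w n p.1 p.2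
        = GS.edgeMat n p i i * w n p.1 p.2 - d i * w n p.1 p.2 := fun p _ => sub_mul _ _ _
    rw [Finset.sum_congr rfl h1, Finset.sum_sub_distrib, ← hgw_eq i, ← Finset.mul_sum,
      hw1 n hn2, mul_one, sub_self]
  have hEY2 : ∀ (k : Fin (N n)) (i : Fin n),
      ∫ ω, (GS.edgeMat n (e n k ω) i i - d i) * (GS.edgeMat n (e n k ω) i i - d i) ∂(μd n)
        ≤ 2 * d i := by
    intro k i
    have h0 : ∫ ω, (GS.edgeMat n (e n k ω) i i - d i) * (GS.edgeMat n (e n k ω) i i - d i) ∂(μd n)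
        = ∑ p ∈ GS.pairs n,
            ((GS.edgeMat n p i i - d i) * (GS.edgeMat n p i i - d i)) * w n p.1 p.2 :=
      hEint k (fun p => (GS.edgeMat n p i i - d i) * (GS.edgeMat n p i i - d i))
    rw [h0]
    calc ∑ p ∈ GS.pairs n, ((GS.edgeMat n p i i - d i) * (GS.edgeMat n p i i - d i)) * w n p.1 p.2
        ≤ ∑ p ∈ GS.pairs n, (GS.edgeMat n p i i + d i^2) * w n p.1 p.2 := by
          refine Finset.sum_le_sum fun p _ => mul_le_mul_of_nonneg_right ?_ (hw0 n p.1 p.2)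
          nlinarith [GS.edgeMat_diag_sq n p i, GS.edgeMat_diag_nonneg n p i, hd0 i]
      _ = d i + d i^2 := by
          rw [Finset.sum_congr rfl (fun p _ => add_mul _ _ _), Finset.sum_add_distrib,
            ← hgw_eq i]
          have : ∀ p ∈ GS.pairs n, d i ^2 * w n p.1 p.2 = d i^2 * w n p.1 p.2 :=
            fun p _ => rfl
          rw [← Finset.mul_sum, hw1 n hn2, mul_one]
      _ ≤ 2 * d i := by nlinarith [hd0 i, hd1 i]
  have hcross : ∀ (i : Fin n) (k l : Fin (N n)), k ≠ l →
      ∫ ω, (GS.edgeMat n (e n k ω) i i - d i) * (GS.edgeMat n (e n l ω) i i - d i) ∂(μd n)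
        = 0 := by
    intro i k l hkl
    have hik : IndepFun (e n k) (e n l) (μd n) := (heind n).indepFun hkl
    have hcomp := hik.comp (φ := fun p => GS.edgeMat n p i i - d i)
      (ψ := fun p => GS.edgeMat n p i i - d i)
      (measurable_of_countable _) (measurable_of_countable _)
    have h := IndepFun.integral_fun_mul_eq_mul_integral hcomp
      (hint k (fun p => GS.edgeMat n p i i - d i)).aestronglyMeasurable (hint l (fun p => GS.edgeMat n p i i - d i)).aestronglyMeasurable
    have h2 : ∫ ω, (GS.edgeMat n (e n k ω) i i - d i) * (GS.edgeMat n (e n l ω) i i - d i) ∂(μd n)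
        = (∫ ω, (GS.edgeMat n (e n k ω) i i - d i) ∂(μd n))
          * ∫ ω, (GS.edgeMat n (e n l ω) i i - d i) ∂(μd n) := h
    rw [h2, hEY k i, hEY l i, mul_zero]
  have hintp : ∀ (i : Fin n) (k l : Fin (N n)),
      Integrable (fun ω => (GS.edgeMat n (e n k ω) i i - d i)
        * (GS.edgeMat n (e n l ω) i i - d i)) (μd n) := by
    intro i k l
    refine Integrable.bdd_mul (c := 2) (hint l (fun p => GS.edgeMat n p i i - d i))
      (hint k (fun p => GS.edgeMat n p i i - d i)).aestronglyMeasurable (ae_of_all _ fun ω => ?_)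
    rw [Real.norm_eq_abs, abs_le]
    constructor <;>
      nlinarith [GS.edgeMat_diag_nonneg n (e n k ω) i, GS.edgeMat_diag_le_one n (e n k ω) i,
        hd0 i, hd1 i]
  have hSrep : S = fun ω => ∑ i, ((N n:ℝ)⁻¹)^2 *
      ∑ k, ∑ l, (GS.edgeMat n (e n k ω) i i - d i) * (GS.edgeMat n (e n l ω) i i - d i) := by
    funext ω
    refine Finset.sum_congr rfl fun i _ => ?_
    have h1 : GS.sparseLap n (N n) (fun k => e n k ω) i i - d i
        = (N n:ℝ)⁻¹ * ∑ k, (GS.edgeMat n (e n k ω) i i - d i) := by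
      rw [hdh_eq ω i, Finset.sum_sub_distrib, Finset.sum_const, Finset.card_univ,
        Fintype.card_fin, mul_sub, nsmul_eq_mul, ← mul_assoc, inv_mul_cancel₀ hNpos.ne',
        one_mul]
    rw [h1, mul_pow]
    congr 1
    rw [pow_two, Finset.sum_mul_sum]
  have hIS : Integrable S (μd n) := by
    rw [hSrep]
    apply integrable_finset_sum
    intro i _
    exact (integrable_finset_sum _ fun k _ =>
      integrable_finset_sum _ fun l _ => hintp i k l).const_mul _
  have hES : ∫ ω, S ω ∂(μd n) ≤ 4 / N n := by
    have h0 : ∫ ω, S ω ∂(μd n) = ∑ i, ((N n:ℝ)⁻¹)^2 *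
        ∑ k, ∑ l, ∫ ω, (GS.edgeMat n (e n k ω) i i - d i)
          * (GS.edgeMat n (e n l ω) i i - d i) ∂(μd n) := by
      simp only [hSrep]
      rw [integral_finset_sum _ (fun i _ => (integrable_finset_sum _ fun k _ =>
        integrable_finset_sum _ fun l _ => hintp i k l).const_mul _)]
      refine Finset.sum_congr rfl fun i _ => ?_
      rw [integral_const_mul]
      congr 1
      rw [integral_finset_sum _ (fun k _ =>
        integrable_finset_sum _ fun l _ => hintp i k l)]
      exact Finset.sum_congr rfl fun k _ => integral_finset_sum _ (fun l _ => hintp i k l)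
    rw [h0]
    have hinner : ∀ i : Fin n, (∑ k, ∑ l, ∫ ω, (GS.edgeMat n (e n k ω) i i - d i)
        * (GS.edgeMat n (e n l ω) i i - d i) ∂(μd n)) ≤ (N n : ℝ) * (2 * d i) := by
      intro i
      have hk : ∀ k : Fin (N n), (∑ l, ∫ ω, (GS.edgeMat n (e n k ω) i i - d i)
          * (GS.edgeMat n (e n l ω) i i - d i) ∂(μd n))
          = ∫ ω, (GS.edgeMat n (e n k ω) i i - d i)
            * (GS.edgeMat n (e n k ω) i i - d i) ∂(μd n) :=
        fun k => Finset.sum_eq_single k (fun l _ hlk => hcross i k l (Ne.symm hlk))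
          (fun h => absurd (Finset.mem_univ k) h)
      calc (∑ k, ∑ l, ∫ ω, (GS.edgeMat n (e n k ω) i i - d i)
            * (GS.edgeMat n (e n l ω) i i - d i) ∂(μd n))
          ≤ ∑ _k : Fin (N n), (2 * d i) :=
            Finset.sum_le_sum fun k _ => le_trans (le_of_eq (hk k)) (hEY2 k i)
        _ = (N n:ℝ) * (2 * d i) := by
            rw [Finset.sum_const, Finset.card_univ, Fintype.card_fin, nsmul_eq_mul]
    calc ∑ i, ((N n:ℝ)⁻¹)^2 *
        ∑ k, ∑ l, ∫ ω, (GS.edgeMat n (e n k ω) i i - d i)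
          * (GS.edgeMat n (e n l ω) i i - d i) ∂(μd n)
        ≤ ∑ i, ((N n:ℝ)⁻¹)^2 * ((N n : ℝ) * (2 * d i)) :=
          Finset.sum_le_sum fun i _ => mul_le_mul_of_nonneg_left (hinner i) (by positivity)
      _ = ∑ i, (N n:ℝ)⁻¹ * (2 * d i) := by
          refine Finset.sum_congr rfl fun i _ => ?_
          field_simp
      _ = (N n:ℝ)⁻¹ * 2 * ∑ i, d i := by
          rw [Finset.mul_sum]
          exact Finset.sum_congr rfl fun i _ => by ring
      _ = 4 / N n := by rw [hdsum]; rw [div_eq_mul_inv]; ring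
  have hS0 : 0 ≤ᵐ[μd n] S := ae_of_all _ fun ω => Finset.sum_nonneg fun i _ => sq_nonneg _
  have hmark := mul_meas_ge_le_integral_of_nonneg hS0 hIS (c^2*b^2)
  have hcb : (0:ℝ) < c^2 * b^2 := by positivity
  have hmeas_le : ((μd n) {ω | c^2*b^2 ≤ S ω}).toReal ≤ (4 / N n) / (c^2*b^2) := by
    rw [le_div_iff₀ hcb]
    calc ((μd n) {ω | c^2*b^2 ≤ S ω}).toReal * (c^2*b^2)
        = (c^2*b^2) * ((μd n) {ω | c^2*b^2 ≤ S ω}).toReal := mul_comm _ _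
      _ ≤ ∫ ω, S ω ∂(μd n) := hmark
      _ ≤ 4 / N n := hES
  have hsub : {ω | ε ≤ |GS.supNorm (fun i => GS.sparseLap n (N n) (fun k => e n k ω) i i)
      / GS.l2Norm (fun i => GS.sparseLap n (N n) (fun k => e n k ω) i i)|}
      ⊆ {ω | c^2*b^2 ≤ S ω} := by
    intro ω hω
    simp only [Set.mem_setOf_eq] at hω ⊢
    by_contra hcon
    push_neg at hcon
    have hSω : S ω
        = ∑ i, ((fun i => GS.sparseLap n (N n) (fun k => e n k ω) i i) i - d i)^2 := rfl
    have hcon' : S ω < c^2 * (GS.l2Norm d)^2 := hcon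
    have hsmall := GS.ratio_small hnpos d
      (fun i => GS.sparseLap n (N n) (fun k => e n k ω) i i) c ε (S ω)
      hbpos hc0 hc2 hc8 hε ha hSω hcon'
    exact absurd hω (not_le.mpr hsmall)
  refine le_trans (le_trans
    (ENNReal.toReal_mono (measure_ne_top _ _) (measure_mono hsub)) hmeas_le) ?_
  rw [div_le_div_iff₀ hcb (by positivity)]
  have hfs : 4 / (N n:ℝ) * (c^2 * N n) = 4 * c^2 := by
    field_simp
  rw [hfs]
  nlinarith [mul_le_mul_of_nonneg_left hb2 (sq_nonneg c)]
end
end
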